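/- arXiv:math/0610196 — 5 statements merged into one kernel-verified Lean document; each statement's English description precedes it below -/
import Mathlib

section
/- Let K have characteristic 0 and let α* be the K-algebra endomorphism of K[X_1,...,X_n] induced by an affine automorphism α in Jordan form with no fixed point (so α*(X_1) = X_1 + 1, and for k > 1 either α*(X_k) = λ(k)·X_k or α*(X_k) = λ(k)·X_k + X_{k-1}). Then for every k with 1 ≤ k ≤ n and every t ≥ 0, the monomial X_1^t · X_k lies in the image of the K-linear map (α* − λ(k)·id) restricted to K[X_1,...,X_k], where λ(1) = 1. -/
open MvPolynomial

/-- The predecessor index (`X_{k-1}` for the variable `X_k`). -/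
def Fin.predIdx {n : ℕ} (k : Fin n) : Fin n :=
  ⟨k.val - 1, lt_of_le_of_lt (Nat.sub_le _ _) k.isLt⟩

lemma binom_expand {R : Type*} [CommRing R] (x : R) (m : ℕ) :
    (x + 1) ^ m = ∑ s ∈ Finset.range (m + 1), x ^ s * (m.choose s : R) := by
  rw [add_pow]; simp

lemma binom_expand' {R : Type*} [CommRing R] (x : R) (t : ℕ) :
    (x + 1) ^ (t + 1)
      = x ^ (t + 1) + (t + 1 : ℕ) * x ^ t
        + ∑ s ∈ Finset.range t, x ^ s * ((t + 1).choose s : R) := by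
  rw [binom_expand, Finset.sum_range_succ, Finset.sum_range_succ, Nat.choose_self,
    Nat.choose_succ_self_right]
  push_cast
  ring

lemma mem_supp_aux {K : Type*} [Field K] {n : ℕ}
    {j k : Fin n} (m : ℕ) (h : j ≤ k) :
    X j ^ m * X k ∈ MvPolynomial.supported K {i : Fin n | i ≤ k} := by
  classical
  rw [mem_supported]
  intro i hi
  rcases Finset.mem_union.mp (vars_mul (X j ^ m) (X k) hi) with h2 | h2
  · have h3 := vars_pow (X j : MvPolynomial (Fin n) K) m h2
    rw [vars_X] at h3
    simp only [Finset.mem_singleton] at h3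
    exact h3 ▸ h
  · rw [vars_X] at h2
    simp only [Finset.mem_singleton] at h2
    exact h2.le

lemma mem_supp_aux2 {K : Type*} [Field K] {n : ℕ}
    {j k : Fin n} (m : ℕ) (h : j ≤ k) :
    X j ^ m ∈ MvPolynomial.supported K {i : Fin n | i ≤ k} := by
  classical
  rw [mem_supported]
  intro i hi
  have h3 := vars_pow (X j : MvPolynomial (Fin n) K) m hi
  rw [vars_X] at h3
  simp only [Finset.mem_singleton] at h3
  exact h3 ▸ h

/-- For an affine automorphism `α` of `K^n` in Jordan normal form with no fixed point
(so `α*(X_1) = X_1 + 1`, and for `k > 1` either `α*(X_k) = λ(k)X_k` or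
`α*(X_k) = λ(k)X_k + X_{k-1}` with `λ` constant on blocks), every monomial `X_1^t · X_k`
lies in the image of `α* - λ(k)·id` restricted to `K[X_1,...,X_k]`. -/
theorem monomial_mem_image_of_jordan {K : Type*} [Field K] [CharZero K] {n : ℕ} [NeZero n]
    (lam : Fin n → K) (hlam : ∀ k, lam k ≠ 0) (hlam0 : lam 0 = 1)
    (σ : MvPolynomial (Fin n) K →ₐ[K] MvPolynomial (Fin n) K)
    (hσ0 : σ (X 0) = X 0 + 1)
    (hσ : ∀ k : Fin n, k ≠ 0 →
      σ (X k) = C (lam k) * X k ∨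
      (σ (X k) = C (lam k) * X k + X k.predIdx ∧ lam k = lam k.predIdx)) :
    ∀ (k : Fin n) (t : ℕ),
      ∃ Q ∈ MvPolynomial.supported K {i : Fin n | i ≤ k},
        σ Q - C (lam k) * Q = X 0 ^ t * X k := by
  classical
  set L : Fin n → (MvPolynomial (Fin n) K →ₗ[K] MvPolynomial (Fin n) K) :=
    fun j => σ.toLinearMap - LinearMap.mulLeft K (C (lam j)) with hLdef
  have hL : ∀ (j : Fin n) (P : MvPolynomial (Fin n) K),
      L j P = σ P - C (lam j) * P := fun j P => rfl
  set T : Fin n → Submodule K (MvPolynomial (Fin n) K) :=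
    fun j => Submodule.map (L j)
      (Subalgebra.toSubmodule (MvPolynomial.supported K {i : Fin n | i ≤ j})) with hTdef
  have memT : ∀ (j : Fin n) (P : MvPolynomial (Fin n) K),
      P ∈ MvPolynomial.supported K {i : Fin n | i ≤ j} →
      σ P - C (lam j) * P ∈ T j := fun j P hP => ⟨P, hP, rfl⟩
  suffices H : ∀ (k : Fin n) (t : ℕ), X 0 ^ t * X k ∈ T k by
    intro k t
    obtain ⟨Q, hQ, hEq⟩ := H k t
    exact ⟨Q, (Subalgebra.mem_toSubmodule _).mp hQ, by rw [← hL]; exact hEq⟩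
  -- basic facts
  have key : ∀ m : ℕ, σ ((X 0 : MvPolynomial (Fin n) K) ^ m) = (X 0 + 1) ^ m := by
    intro m; rw [map_pow, hσ0]
  have scale : ∀ (j : Fin n) (c : K) (p : MvPolynomial (Fin n) K), c ≠ 0 →
      C c * p ∈ T j → p ∈ T j := by
    intro j c p hc hp
    have h2 := Submodule.smul_mem (T j) c⁻¹ hp
    rwa [MvPolynomial.smul_eq_C_mul, ← mul_assoc, ← C_mul, inv_mul_cancel₀ hc, C_1,
      one_mul] at h2
  have hone : (1 : MvPolynomial (Fin n) K) ∈ T 0 := by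
    have h2 := memT 0 (X 0) (X_mem_supported.mpr (le_refl (0 : Fin n)))
    rwa [hσ0, hlam0, C_1, one_mul, add_sub_cancel_left] at h2
  have Tmono : ∀ k : Fin n, lam k = lam k.predIdx → T k.predIdx ≤ T k := by
    intro k hlk F hF
    obtain ⟨Q, hQ, hEq⟩ := hF
    have hple : k.predIdx ≤ k := by
      rw [Fin.le_def]; exact Nat.sub_le _ _
    refine ⟨Q, ?_, ?_⟩
    · exact supported_mono (fun i (hi : i ≤ k.predIdx) => le_trans hi hple) hQ
    · rw [hL] at hEq ⊢
      rw [hlk]; exact hEq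
  -- the case k = 0
  have Hk0 : ∀ t : ℕ, (X 0 : MvPolynomial (Fin n) K) ^ t * X 0 ∈ T 0 := by
    intro t
    induction t using Nat.strong_induction_on with
    | _ t iht =>
      have hmain : σ ((X 0 : MvPolynomial (Fin n) K) ^ (t + 1 + 1))
          - C (lam 0) * (X 0 ^ (t + 1 + 1))
          = ((t + 1 + 1 : ℕ) : MvPolynomial (Fin n) K) * X 0 ^ (t + 1)
            + ∑ s ∈ Finset.range (t + 1),
                X 0 ^ s * (((t + 1 + 1).choose s : ℕ) : MvPolynomial (Fin n) K) := by
        rw [key, hlam0, C_1, one_mul, binom_expand']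
        ring
      have hmem := memT 0 (X 0 ^ (t + 1 + 1)) (mem_supp_aux2 _ (le_refl (0 : Fin n)))
      rw [hmain] at hmem
      have hsum : (∑ s ∈ Finset.range (t + 1),
          (X 0 : MvPolynomial (Fin n) K) ^ s
            * (((t + 1 + 1).choose s : ℕ) : MvPolynomial (Fin n) K)) ∈ T 0 := by
        apply Submodule.sum_mem
        intro s hs
        have hs' : s < t + 1 := Finset.mem_range.mp hs
        rw [mul_comm, ← nsmul_eq_mul]
        apply nsmul_mem
        cases s with
        | zero => simpa using hone
        | succ s =>
          rw [pow_succ]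
          exact iht s (by omega)
      have h2 : ((t + 1 + 1 : ℕ) : MvPolynomial (Fin n) K) * X 0 ^ (t + 1) ∈ T 0 := by
        have h3 := Submodule.sub_mem _ hmem hsum
        simpa using h3
      rw [pow_succ] at h2
      have h4 : C ((t + 1 + 1 : ℕ) : K) * ((X 0 : MvPolynomial (Fin n) K) ^ t * X 0) ∈ T 0 := by
        rw [map_natCast]; exact h2
      exact scale 0 _ _ (Nat.cast_ne_zero.mpr (by omega)) h4
  -- main induction on the index
  have hv0 : ((0 : Fin n) : ℕ) = 0 := Fin.val_zero n
  have H : ∀ N : ℕ, ∀ k : Fin n, (k : ℕ) ≤ N → ∀ t : ℕ, X 0 ^ t * X k ∈ T k := by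
    intro N
    induction N with
    | zero =>
      intro k hk t
      have hk0 : k = 0 := by
        apply Fin.ext; rw [hv0]; omega
      rw [hk0]; exact Hk0 t
    | succ N ihN =>
      intro k hk
      by_cases hk0 : k = 0
      · intro t; rw [hk0]; exact Hk0 t
      · have hkv : (k : ℕ) ≠ 0 := fun h => hk0 (Fin.ext (by rw [hv0]; omega))
        have h0k : (0 : Fin n) ≤ k := Fin.zero_le k
        obtain ⟨r, hr, hrcases⟩ :
            ∃ r : MvPolynomial (Fin n) K, σ (X k) = C (lam k) * X k + r ∧
              (r = 0 ∨ (r = X k.predIdx ∧ lam k = lam k.predIdx)) := by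
          rcases hσ k hk0 with h | ⟨h, hlk⟩
          · exact ⟨0, by rw [h, add_zero], Or.inl rfl⟩
          · exact ⟨X k.predIdx, h, Or.inr ⟨rfl, hlk⟩⟩
        have hBmem : ∀ m : ℕ, (X 0 : MvPolynomial (Fin n) K) ^ m * r ∈ T k := by
          rcases hrcases with h | ⟨h, hlk⟩
          · intro m; rw [h, mul_zero]; exact Submodule.zero_mem _
          · intro m
            rw [h]
            apply Tmono k hlk
            apply ihN k.predIdx _ m
            show (k : ℕ) - 1 ≤ N
            omega
        intro t
        induction t using Nat.strong_induction_on with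
        | _ t iht =>
          have hmain : σ ((X 0 : MvPolynomial (Fin n) K) ^ (t + 1) * X k)
              - C (lam k) * (X 0 ^ (t + 1) * X k)
              = C (lam k) * ((((t + 1 : ℕ) : MvPolynomial (Fin n) K)) * X 0 ^ t
                  + ∑ s ∈ Finset.range t,
                      X 0 ^ s * (((t + 1).choose s : ℕ) : MvPolynomial (Fin n) K)) * X k
                + (X 0 ^ (t + 1) + ((t + 1 : ℕ) : MvPolynomial (Fin n) K) * X 0 ^ t
                    + ∑ s ∈ Finset.range t,
                        X 0 ^ s * (((t + 1).choose s : ℕ) : MvPolynomial (Fin n) K)) * r := by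
            rw [map_mul, key, hr, binom_expand']
            ring
          have hA := memT k (X 0 ^ (t + 1) * X k) (mem_supp_aux (t + 1) h0k)
          rw [hmain] at hA
          have hB : ((X 0 : MvPolynomial (Fin n) K) ^ (t + 1)
              + ((t + 1 : ℕ) : MvPolynomial (Fin n) K) * X 0 ^ t
              + ∑ s ∈ Finset.range t,
                  X 0 ^ s * (((t + 1).choose s : ℕ) : MvPolynomial (Fin n) K)) * r ∈ T k := by
            rw [add_mul, add_mul, Finset.sum_mul]
            apply Submodule.add_mem
            apply Submodule.add_mem
            · exact hBmem (t + 1)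
            · rw [mul_assoc, ← nsmul_eq_mul]
              exact nsmul_mem (hBmem t) _
            · apply Submodule.sum_mem
              intro s hs
              rw [mul_comm ((X 0 : MvPolynomial (Fin n) K) ^ s) _, mul_assoc, ← nsmul_eq_mul]
              exact nsmul_mem (hBmem s) _
          have hS : C (lam k) * ((∑ s ∈ Finset.range t,
              (X 0 : MvPolynomial (Fin n) K) ^ s
                * (((t + 1).choose s : ℕ) : MvPolynomial (Fin n) K)) * X k) ∈ T k := by
            rw [Finset.sum_mul, Finset.mul_sum]
            apply Submodule.sum_mem
            intro s hs
            have hs' : s < t := Finset.mem_range.mp hs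
            have heq : C (lam k) * ((X 0 : MvPolynomial (Fin n) K) ^ s
                * (((t + 1).choose s : ℕ) : MvPolynomial (Fin n) K) * X k)
                = ((t + 1).choose s) • (C (lam k) * (X 0 ^ s * X k)) := by
              rw [nsmul_eq_mul]; ring
            rw [heq]
            apply nsmul_mem
            rw [← MvPolynomial.smul_eq_C_mul]
            exact Submodule.smul_mem _ _ (iht s hs')
          have hC : C (lam k * ((t + 1 : ℕ) : K))
              * ((X 0 : MvPolynomial (Fin n) K) ^ t * X k) ∈ T k := by
            have h5 := Submodule.sub_mem _ hA hB
            have h6 := Submodule.sub_mem _ h5 hS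
            have heq : C (lam k * ((t + 1 : ℕ) : K))
                * ((X 0 : MvPolynomial (Fin n) K) ^ t * X k)
                = (C (lam k) * ((((t + 1 : ℕ) : MvPolynomial (Fin n) K)) * X 0 ^ t
                    + ∑ s ∈ Finset.range t,
                        X 0 ^ s * (((t + 1).choose s : ℕ) : MvPolynomial (Fin n) K)) * X k
                  + (X 0 ^ (t + 1) + ((t + 1 : ℕ) : MvPolynomial (Fin n) K) * X 0 ^ t
                      + ∑ s ∈ Finset.range t,
                          X 0 ^ s * (((t + 1).choose s : ℕ) : MvPolynomial (Fin n) K)) * r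
                  - (X 0 ^ (t + 1) + ((t + 1 : ℕ) : MvPolynomial (Fin n) K) * X 0 ^ t
                      + ∑ s ∈ Finset.range t,
                          X 0 ^ s * (((t + 1).choose s : ℕ) : MvPolynomial (Fin n) K)) * r)
                  - C (lam k) * ((∑ s ∈ Finset.range t,
                      X 0 ^ s * (((t + 1).choose s : ℕ) : MvPolynomial (Fin n) K)) * X k) := by
              rw [C_mul, map_natCast]
              ring
            rw [heq]
            exact h6
          exact scale k _ _ (mul_ne_zero (hlam k) (Nat.cast_ne_zero.mpr (by omega))) hC
  intro k t
  exact H (k : ℕ) k le_rfl t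
end

section
/- Over a field K of characteristic 0, if j is an index with α*(X_j) = μ·X_j + X_{j-1} (not the first index of a Jordan block), then there exists a polynomial Q ∈ K[X_1,...,X_{j-1}] with α*(Q) = μ·Q − X_{j-1}, where α* is the substitution endomorphism of K[X_1,...,X_n] determined by an affine automorphism in Jordan form with α*(X_1) = X_1 + 1. -/
open MvPolynomial

/-- The forward difference operator is surjective on `K[X]` in char 0. -/
lemma delta_surj {K : Type*} [Field K] [CharZero K] (q : Polynomial K) :
    ∃ p : Polynomial K, p.comp (Polynomial.X + 1) - p = q := by
  have H : ∀ d : ℕ, ∀ q : Polynomial K, q.natDegree < d →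
      ∃ p : Polynomial K, p.comp (Polynomial.X + 1) - p = q := by
    intro d
    induction d using Nat.strong_induction_on with
    | _ d ih =>
      intro q hq
      by_cases h0 : q = 0
      · exact ⟨0, by simp [h0]⟩
      set e := q.natDegree with he
      set g : Polynomial K := (Polynomial.X + 1) ^ (e + 1) - Polynomial.X ^ (e + 1) with hgdef
      have hg_coeff : ∀ m, e < m → g.coeff m = 0 := by
        intro m hm
        rcases eq_or_lt_of_le (Nat.succ_le_of_lt hm) with h | h
        · simp [hgdef, Polynomial.coeff_X_add_one_pow, Polynomial.coeff_X_pow, ← h]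
        · simp [hgdef, Polynomial.coeff_X_add_one_pow, Polynomial.coeff_X_pow,
            Nat.choose_eq_zero_of_lt h, (Nat.lt_of_succ_lt h).ne']
          omega
      have hg_le : g.natDegree ≤ e := Polynomial.natDegree_le_iff_coeff_eq_zero.mpr hg_coeff
      have hg_e : g.coeff e = (e + 1 : K) := by
        simp [hgdef, Polynomial.coeff_X_add_one_pow, Polynomial.coeff_X_pow, Nat.choose_succ_self_right]
      have hne : ((e : K) + 1) ≠ 0 := by
        exact_mod_cast (Nat.cast_add_one_ne_zero (R := K) e)
      set c : K := q.leadingCoeff / (e + 1) with hc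
      set q' : Polynomial K := q - Polynomial.C c * g with hq'def
      have hq'_coeff : q'.coeff e = 0 := by
        simp [hq'def, hg_e, hc, Polynomial.leadingCoeff, ← he]
        field_simp
        ring
      have hq'_le : q'.natDegree ≤ e :=
        le_trans (Polynomial.natDegree_sub_le _ _) (by
          simp only [max_le_iff]
          exact ⟨le_refl _, le_trans (Polynomial.natDegree_C_mul_le _ _) hg_le⟩)
      have hΔ : (Polynomial.C c * Polynomial.X ^ (e + 1)).comp (Polynomial.X + 1) - Polynomial.C c * Polynomial.X ^ (e + 1) = Polynomial.C c * g := by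
        simp [Polynomial.mul_comp, Polynomial.pow_comp, hgdef]; ring
      by_cases h1 : q' = 0
      · refine ⟨Polynomial.C c * Polynomial.X ^ (e + 1), ?_⟩
        rw [hΔ]
        have := sub_eq_zero.mp h1
        linear_combination -this
      · have hlt : q'.natDegree < e := by
          rcases lt_or_eq_of_le hq'_le with h | h
          · exact h
          · exfalso
            apply Polynomial.leadingCoeff_ne_zero.mpr h1
            rw [Polynomial.leadingCoeff, h]
            exact hq'_coeff
        have hed : e < d := hq
        obtain ⟨p', hp'⟩ := ih e hed q' hlt
        refine ⟨p' + Polynomial.C c * Polynomial.X ^ (e + 1), ?_⟩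
        rw [Polynomial.add_comp]
        linear_combination hp' + hΔ
  exact H (q.natDegree + 1) q (Nat.lt_succ_self _)


lemma aux_exists {K : Type*} [Field K] [CharZero K] {n : ℕ} [NeZero n]
    (lam : Fin n → K) (hlam : ∀ k, lam k ≠ 0) (hlam0 : lam 0 = 1)
    (σ : MvPolynomial (Fin n) K →ₐ[K] MvPolynomial (Fin n) K)
    (hσ0 : σ (X 0) = X 0 + 1)
    (hσ : ∀ k : Fin n, k ≠ 0 →
      σ (X k) = C (lam k) * X k ∨
      (σ (X k) = C (lam k) * X k + X k.predIdx ∧ lam k = lam k.predIdx))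
    (μ : K) :
    ∀ m : ℕ, ∀ k : Fin n, k.val ≤ m → lam k = μ → ∀ p : Polynomial K,
      ∃ Q ∈ MvPolynomial.supported K {i : Fin n | i ≤ k},
        σ Q = C μ * Q - X k * Polynomial.aeval (X 0) p := by
  -- σ acts on polynomials in X 0 by shifting
  have hcomp : ∀ P : Polynomial K,
      σ (Polynomial.aeval (X (0 : Fin n)) P)
        = Polynomial.aeval (X (0 : Fin n)) (P.comp (Polynomial.X + 1)) := by
    intro P
    rw [Polynomial.aeval_comp, ← Polynomial.aeval_algHom_apply]
    simp [hσ0]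
  -- membership of univariate polynomials in X 0
  have hmem0 : ∀ (P : Polynomial K) (k : Fin n),
      Polynomial.aeval (X (0 : Fin n)) P ∈ MvPolynomial.supported K {i : Fin n | i ≤ k} := by
    intro P k
    have h1 : Polynomial.aeval (X (0 : Fin n)) P
        ∈ Algebra.adjoin K {(X 0 : MvPolynomial (Fin n) K)} := by
      rw [Algebra.adjoin_singleton_eq_range_aeval K (X 0 : MvPolynomial (Fin n) K)]
      exact ⟨P, rfl⟩
    refine Algebra.adjoin_mono ?_ h1
    rintro x rfl
    exact ⟨0, show (0:Fin n) ≤ k from Fin.zero_le k, rfl⟩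
  intro m
  induction m with
  | zero =>
    intro k hk hkμ p
    have hk0 : k = 0 := Fin.ext (by simpa using hk)
    subst hk0
    have hμ1 : μ = 1 := hkμ ▸ hlam0
    obtain ⟨R, hR⟩ := delta_surj (-(Polynomial.X * p))
    refine ⟨Polynomial.aeval (X (0 : Fin n)) R, hmem0 R 0, ?_⟩
    rw [hcomp R]
    have : R.comp (Polynomial.X + 1) = R + -(Polynomial.X * p) := by linear_combination hR
    rw [this, hμ1]
    simp only [map_add, map_neg, map_mul, Polynomial.aeval_X, map_one, one_mul]
    ring
  | succ m' ih =>
    intro k hk hkμ p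
    by_cases hkm : k.val ≤ m'
    · exact ih k hkm hkμ p
    have hk0 : k ≠ 0 := by
      intro h; subst h; simp [Fin.val_zero] at hkm
    have hμ0 : μ ≠ 0 := hkμ ▸ hlam k
    obtain ⟨P, hP⟩ := delta_surj (Polynomial.C (-μ⁻¹) * p)
    -- the key computation
    have hkey : C μ * Polynomial.aeval (X (0 : Fin n)) (P.comp (Polynomial.X + 1))
        = C μ * Polynomial.aeval (X (0 : Fin n)) P - Polynomial.aeval (X (0 : Fin n)) p := by
      have h1 : P.comp (Polynomial.X + 1) = P + Polynomial.C (-μ⁻¹) * p := by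
        linear_combination hP
      rw [h1, map_add, map_mul, Polynomial.aeval_C]
      rw [mul_add, ← mul_assoc]
      have h2 : (C μ : MvPolynomial (Fin n) K) * algebraMap K (MvPolynomial (Fin n) K) (-μ⁻¹)
          = -1 := by
        rw [MvPolynomial.algebraMap_eq, ← map_mul]
        rw [mul_neg, mul_inv_cancel₀ hμ0]
        simp
      rw [h2]
      ring
    rcases hσ k hk0 with h | ⟨h, hpred⟩
    · -- first index of a block
      refine ⟨X k * Polynomial.aeval (X (0 : Fin n)) P, ?_, ?_⟩
      · exact mul_mem (MvPolynomial.X_mem_supported.mpr (le_refl k)) (hmem0 P k)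
      · rw [map_mul, h, hcomp P, hkμ]
        linear_combination X k * hkey
    · -- chained to the previous variable
      have hpredμ : lam k.predIdx = μ := hpred ▸ hkμ
      have hpredm : k.predIdx.val ≤ m' := by
        have : k.val ≠ 0 := fun hh => hk0 (Fin.ext (by simpa using hh))
        show k.val - 1 ≤ m'
        omega
      obtain ⟨B, hBmem, hB⟩ := ih k.predIdx hpredm hpredμ (P.comp (Polynomial.X + 1))
      have hple : k.predIdx ≤ k := by
        show k.val - 1 ≤ k.val
        omega
      refine ⟨X k * Polynomial.aeval (X (0 : Fin n)) P + B, ?_, ?_⟩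
      · refine add_mem (mul_mem (MvPolynomial.X_mem_supported.mpr (le_refl k)) (hmem0 P k)) ?_
        exact MvPolynomial.supported_mono (fun i (hi : i ≤ k.predIdx) => le_trans hi hple) hBmem
      · rw [map_add, map_mul, h, hcomp P, hB, hkμ]
        linear_combination X k * hkey

/-- If `j` is not the first index of a Jordan block, i.e. `α*(X_j) = μ X_j + X_{j-1}`,
then there is `Q ∈ K[X_1,...,X_{j-1}]` with `α*(Q) = μ Q - X_{j-1}`. -/
theorem exists_Q_of_not_first_index {K : Type*} [Field K] [CharZero K] {n : ℕ} [NeZero n]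
    (lam : Fin n → K) (hlam : ∀ k, lam k ≠ 0) (hlam0 : lam 0 = 1)
    (σ : MvPolynomial (Fin n) K →ₐ[K] MvPolynomial (Fin n) K)
    (hσ0 : σ (X 0) = X 0 + 1)
    (hσ : ∀ k : Fin n, k ≠ 0 →
      σ (X k) = C (lam k) * X k ∨
      (σ (X k) = C (lam k) * X k + X k.predIdx ∧ lam k = lam k.predIdx))
    (j : Fin n) (hj : j ≠ 0) (μ : K) (hμ : μ = lam j)
    (hj' : σ (X j) = C μ * X j + X j.predIdx) :
    ∃ Q ∈ MvPolynomial.supported K {i : Fin n | i < j},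
      σ Q = C μ * Q - X j.predIdx := by
  have hjv : j.val ≠ 0 := fun hh => hj (Fin.ext (by simpa using hh))
  -- the predecessor has the same eigenvalue
  have hpredμ : lam j.predIdx = μ := by
    rcases hσ j hj with h | ⟨h, hpred⟩
    · exfalso
      rw [hj', hμ] at h
      have : (X j.predIdx : MvPolynomial (Fin n) K) = 0 := by linear_combination h
      exact MvPolynomial.X_ne_zero _ this
    · rw [← hpred, ← hμ]
  obtain ⟨Q, hQmem, hQ⟩ := aux_exists lam hlam hlam0 σ hσ0 hσ μ j.predIdx.val j.predIdx
    (le_refl _) hpredμ 1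
  refine ⟨Q, ?_, ?_⟩
  · refine MvPolynomial.supported_mono ?_ hQmem
    intro i (hi : i ≤ j.predIdx)
    show i.val < j.val
    have h1 : i.val ≤ j.val - 1 := hi
    omega
  · rw [hQ]
    simp
end

section
/- If two almost-diagonal automorphisms θ_μ: x ↦ (x_1+1, μ_2 x_2,...,μ_n x_n) and θ_ν: x ↦ (x_1+1, ν_2 x_2,...,ν_n x_n) of K^n are conjugate by a polynomial automorphism of K^n, then the tuples (μ_2,...,μ_n) and (ν_2,...,ν_n) are equal up to a permutation. -/
open MvPolynomial

section Aux

variable {K : Type*}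

/-- Chain rule for `bind₁` on multivariate polynomials over `Fin n`. -/
lemma pderiv_bind₁_eq {n : ℕ} [CommSemiring K] (f : Fin n → MvPolynomial (Fin n) K)
    (j : Fin n) (p : MvPolynomial (Fin n) K) :
    pderiv j (bind₁ f p) = ∑ k : Fin n, bind₁ f (pderiv k p) * pderiv j (f k) := by
  induction p using MvPolynomial.induction_on with
  | C a => simp
  | add p q hp hq =>
      simp only [map_add, hp, hq, add_mul, ← Finset.sum_add_distrib]
  | mul_X p k hp =>
      simp only [map_mul, map_add, bind₁_X_right, pderiv_mul, hp, Finset.sum_mul, add_mul]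
      rw [Finset.sum_add_distrib]
      congr 1
      · exact Finset.sum_congr rfl fun m _ => by ring
      · rw [Finset.sum_eq_single k]
        · classical
          simp [pderiv_X]
        · intro m _ hm
          classical
          simp [pderiv_X, Pi.single_apply, hm]
        · simp

lemma eval_bind₁_eq [CommSemiring K] {n : ℕ} (x : Fin n → K)
    (f : Fin n → MvPolynomial (Fin n) K) (p : MvPolynomial (Fin n) K) :
    eval x (bind₁ f p) = eval (fun i => eval x (f i)) p := by
  have h := aeval_bind₁ (R := K) x f p
  simpa only [← coe_aeval_eq_eval, RingHom.coe_coe] using h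

lemma polyeval_aeval_eq [CommSemiring K] {n : ℕ} (t : K)
    (g : Fin n → Polynomial K) (p : MvPolynomial (Fin n) K) :
    Polynomial.eval t (MvPolynomial.aeval g p) = eval (fun i => Polynomial.eval t (g i)) p := by
  induction p using MvPolynomial.induction_on with
  | C a => simp
  | add p q hp hq => simp [hp, hq]
  | mul_X p k hp => simp [hp]

lemma lambda_eq_one [Field K] [CharZero K] (q : Polynomial K) (l : K)
    (h : ∀ m : ℕ, q.eval (m : K) = l ^ m * q.eval 0) (h0 : q.eval 0 ≠ 0) : l = 1 := by
  have hq : q.comp (Polynomial.X + Polynomial.C 1) = Polynomial.C l * q := by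
    apply Polynomial.eq_of_infinite_eval_eq
    apply Set.infinite_of_injective_forall_mem (f := (Nat.cast : ℕ → K)) Nat.cast_injective
    intro m
    have h1 : ((m : K) + 1) = ((m + 1 : ℕ) : K) := by push_cast; ring
    simp only [Set.mem_setOf_eq, Polynomial.eval_comp, Polynomial.eval_add, Polynomial.eval_X,
      Polynomial.eval_C, Polynomial.eval_mul, h1, h, pow_succ]
    ring
  have hqne : q ≠ 0 := fun hz => by simp [hz] at h0
  have hlc := congrArg Polynomial.leadingCoeff hq
  rw [Polynomial.leadingCoeff_comp
      (by rw [Polynomial.natDegree_X_add_C]; exact one_ne_zero), Polynomial.leadingCoeff_mul,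
    Polynomial.leadingCoeff_C] at hlc
  have hX : (Polynomial.X + Polynomial.C (1:K)).leadingCoeff = 1 :=
    (Polynomial.monic_X_add_C 1).leadingCoeff
  rw [hX, one_pow, mul_one] at hlc
  have hql : q.leadingCoeff ≠ 0 := Polynomial.leadingCoeff_ne_zero.mpr hqne
  exact (mul_right_cancel₀ hql (by rw [one_mul, ← hlc])).symm

lemma exists_perm_of_det_ne_zero [CommRing K] {n : ℕ} (M : Matrix (Fin n) (Fin n) K)
    (h : M.det ≠ 0) : ∃ σ : Equiv.Perm (Fin n), ∀ j, M (σ j) j ≠ 0 := by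
  by_contra hc
  push_neg at hc
  apply h
  rw [Matrix.det_apply]
  refine Finset.sum_eq_zero fun σ _ => ?_
  obtain ⟨j, hj⟩ := hc σ
  refine smul_eq_zero_of_right _ ?_
  exact Finset.prod_eq_zero (Finset.mem_univ j) hj

end Aux

/-- `f : K^n → K^n` is a polynomial map. -/
def IsPolyMap {K : Type*} [CommSemiring K] {n : ℕ} (f : (Fin n → K) → (Fin n → K)) : Prop :=
  ∃ P : Fin n → MvPolynomial (Fin n) K, ∀ x i, f x i = eval x (P i)

/-- If two almost-diagonal automorphisms `θ_μ` and `θ_ν` of `K^n` are conjugate by a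
polynomial automorphism of `K^n`, then their eigenvalues coincide up to a permutation. -/
theorem almost_diagonal_conj_in_Aut_imp_perm {K : Type*} [Field K] [IsAlgClosed K]
    [CharZero K] {n : ℕ} [NeZero n]
    (μ ν : Fin n → K) (hμ : ∀ i : Fin n, i ≠ 0 → μ i ≠ 0) (hν : ∀ i : Fin n, i ≠ 0 → ν i ≠ 0)
    (π πinv : (Fin n → K) → (Fin n → K))
    (hπ : IsPolyMap π) (hπinv : IsPolyMap πinv)
    (h₁ : πinv ∘ π = id) (h₂ : π ∘ πinv = id)
    (hconj : ∀ x : Fin n → K,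
      π (fun i => if i = 0 then x 0 + 1 else ν i * x i)
        = fun i => if i = 0 then π x 0 + 1 else μ i * π x i) :
    ∃ e : Equiv.Perm (Fin n), e 0 = 0 ∧ ∀ i : Fin n, i ≠ 0 → μ (e i) = ν i := by
  classical
  haveI : Infinite K := Infinite.of_injective _ (Nat.cast_injective (R := K))
  obtain ⟨P, hP⟩ := hπ
  obtain ⟨Q, hQ⟩ := hπinv
  set μ' : Fin n → K := fun i => if i = 0 then 1 else μ i with hμ'
  set ν' : Fin n → K := fun i => if i = 0 then 1 else ν i with hν'
  have hμ'0 : ∀ i, μ' i ≠ 0 := by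
    intro i; by_cases h : i = 0 <;> simp [hμ', h, hμ i]
  have hν'0 : ∀ i, ν' i ≠ 0 := by
    intro i; by_cases h : i = 0 <;> simp [hν', h, hν i]
  set S : Fin n → MvPolynomial (Fin n) K :=
    fun k => if k = 0 then X 0 + 1 else C (ν k) * X k with hS
  have hθ : ∀ (x : Fin n → K) (k : Fin n),
      eval x (S k) = if k = 0 then x 0 + 1 else ν k * x k := by
    intro x k; by_cases h : k = 0 <;> simp [hS, h]
  -- the conjugacy as a polynomial identity
  have hI : ∀ i, bind₁ S (P i) = if i = 0 then P 0 + 1 else C (μ i) * P i := by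
    intro i
    apply MvPolynomial.funext
    intro x
    rw [eval_bind₁_eq]
    have hx : (fun k => eval x (S k)) = fun k => if k = 0 then x 0 + 1 else ν k * x k :=
      funext (hθ x)
    have h1 : eval (fun k => if k = 0 then x 0 + 1 else ν k * x k) (P i)
        = π (fun k => if k = 0 then x 0 + 1 else ν k * x k) i := (hP _ i).symm
    rw [hx, h1, hconj x]
    by_cases h : i = 0
    · subst h; simp [← hP x]
    · simp [h, ← hP x]
  -- derivatives of the substitution
  have hdS : ∀ j k : Fin n, pderiv j (S k) = if k = j then C (ν' j) else 0 := by
    intro j k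
    by_cases hk : k = 0
    · subst hk
      by_cases hj : j = 0
      · subst hj; simp [hS, hν']
      · rw [if_neg fun h => hj h.symm]
        simp [hS, pderiv_X_of_ne (Ne.symm hj)]
    · by_cases hkj : k = j
      · subst hkj
        rw [if_pos rfl]
        simp [hS, hk, hν', pderiv_C_mul]
      · rw [if_neg hkj]
        simp [hS, hk, pderiv_C_mul, pderiv_X, Pi.single_apply, hkj]
  -- semi-invariance of the partial derivatives
  have hkey : ∀ i j, C (ν' j) * bind₁ S (pderiv j (P i)) = C (μ' i) * pderiv j (P i) := by
    intro i j
    have h1 := congrArg (pderiv j) (hI i)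
    rw [pderiv_bind₁_eq] at h1
    rw [Finset.sum_eq_single j
      (fun b _ hb => by rw [hdS j b, if_neg hb, mul_zero])
      (fun hj => absurd (Finset.mem_univ j) hj)] at h1
    rw [hdS j j, if_pos rfl] at h1
    calc C (ν' j) * bind₁ S (pderiv j (P i))
        = bind₁ S (pderiv j (P i)) * C (ν' j) := mul_comm _ _
      _ = pderiv j (if i = 0 then P 0 + 1 else C (μ i) * P i) := h1
      _ = C (μ' i) * pderiv j (P i) := by
          by_cases hi : i = 0
          · subst hi; simp [hμ', map_add]
          · simp [hi, hμ', pderiv_C_mul]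
  -- the orbit points (m, 0, ..., 0)
  set pt : ℕ → (Fin n → K) := fun m k => if k = 0 then (m : K) else 0 with hpt
  have hpt0 : pt 0 = fun _ => 0 := by
    funext k; by_cases h : k = 0 <;> simp [hpt, h]
  have hptS : ∀ m, (fun k => eval (pt m) (S k)) = pt (m + 1) := by
    intro m
    funext k
    rw [hθ]
    by_cases h : k = 0 <;> simp [hpt, h]
  -- the linear part of π at the origin
  set A : Matrix (Fin n) (Fin n) K :=
    Matrix.of (fun i j => eval (fun _ => 0) (pderiv j (P i))) with hA
  have hAmain : ∀ i j, A i j ≠ 0 → μ' i = ν' j := by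
    intro i j hAij
    set g := pderiv j (P i) with hg
    set u : ℕ → K := fun m => eval (pt m) g with hu
    have hu0 : u 0 ≠ 0 := by
      have : u 0 = A i j := by rw [hu]; simp only [hpt0]; rfl
      rw [this]; exact hAij
    have hrec : ∀ m, ν' j * u (m + 1) = μ' i * u m := by
      intro m
      have h2 := congrArg (eval (pt m)) (hkey i j)
      rwa [map_mul, eval_C, eval_bind₁_eq, hptS m, map_mul, eval_C] at h2
    have hufo : ∀ m, u m = (μ' i / ν' j) ^ m * u 0 := by
      intro m
      induction m with
      | zero => simp
      | succ m ih =>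
        have h2 : u (m + 1) = μ' i / ν' j * u m := by
          rw [div_mul_eq_mul_div, eq_div_iff (hν'0 j)]
          linear_combination hrec m
        rw [h2, ih, pow_succ]; ring
    set q : Polynomial K :=
      MvPolynomial.aeval (fun k => if k = 0 then Polynomial.X else 0) g with hq
    have hqe : ∀ t : K, q.eval t = eval (fun k => if k = 0 then t else 0) g := by
      intro t
      have hfe : (fun i => Polynomial.eval t (if i = 0 then Polynomial.X else 0))
          = (fun k : Fin n => if k = 0 then t else 0) := by
        funext k; by_cases hk : k = 0 <;> simp [hk]
      rw [hq, polyeval_aeval_eq, hfe]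
    have hq0 : q.eval 0 = u 0 := by
      rw [hqe]
      have hfe : (fun k : Fin n => if k = 0 then (0:K) else 0) = pt 0 := by
        rw [hpt0]; funext k; simp
      rw [hfe]
    have hqm : ∀ m : ℕ, q.eval (m : K) = (μ' i / ν' j) ^ m * q.eval 0 := by
      intro m
      rw [hq0, hqe]
      have hfe2 : (fun k : Fin n => if k = 0 then (m : K) else 0) = pt m := by rw [hpt]
      rw [hfe2]
      exact hufo m
    have hl := lambda_eq_one q (μ' i / ν' j) hqm (by rw [hq0]; exact hu0)
    exact (div_eq_one_iff_eq (hν'0 j)).mp hl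
  -- the linear part of the inverse
  set c : Fin n → K := π (fun _ => 0) with hc
  set B : Matrix (Fin n) (Fin n) K :=
    Matrix.of (fun i j => eval c (pderiv j (Q i))) with hB
  have hQP : ∀ i, bind₁ P (Q i) = X i := by
    intro i
    apply MvPolynomial.funext
    intro x
    rw [eval_bind₁_eq, eval_X]
    have hx : (fun k => eval x (P k)) = π x := funext fun k => (hP x k).symm
    rw [hx, ← hQ (π x) i]
    have := congrFun h₁ x
    simpa using congrFun this i
  have hBA : B * A = 1 := by
    ext i j
    rw [Matrix.mul_apply, Matrix.one_apply]
    have h1 := congrArg (pderiv j) (hQP i)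
    rw [pderiv_bind₁_eq] at h1
    have h2 := congrArg (eval (fun _ => (0:K))) h1
    rw [map_sum] at h2
    have h3 : ∀ k, eval (fun _ => (0:K)) (bind₁ P (pderiv k (Q i)) * pderiv j (P k))
        = B i k * A k j := by
      intro k
      rw [map_mul, eval_bind₁_eq]
      have hx : (fun l => eval (fun _ => (0:K)) (P l)) = c := by
        rw [hc]; funext l; exact (hP _ l).symm
      rw [hx]
      rfl
    have h4 : ∑ k, B i k * A k j = eval (fun _ => (0:K)) (pderiv j (X i)) := by
      rw [← h2]
      exact Finset.sum_congr rfl fun k _ => (h3 k).symm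
    rw [h4, pderiv_X]
    simp [Pi.single_apply]
  have hdet : A.det ≠ 0 := by
    intro h0
    have hd := congrArg Matrix.det hBA
    rw [Matrix.det_mul, h0, mul_zero, Matrix.det_one] at hd
    exact zero_ne_one hd
  obtain ⟨σ, hσ⟩ := exists_perm_of_det_ne_zero A hdet
  have hσμν : ∀ j, μ' (σ j) = ν' j := fun j => hAmain _ _ (hσ j)
  refine ⟨σ * Equiv.swap 0 (σ⁻¹ 0), ?_, ?_⟩
  · simp [Equiv.swap_apply_left]
  · intro i hi
    by_cases hiσ : i = σ⁻¹ 0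
    · subst hiσ
      have e1 : (σ * Equiv.swap 0 (σ⁻¹ 0)) (σ⁻¹ 0) = σ 0 := by
        simp [Equiv.swap_apply_right]
      rw [e1]
      have hσ0 : σ 0 ≠ 0 := by
        intro h
        exact hi (Equiv.Perm.inv_eq_iff_eq.mpr h.symm)
      have q1 : μ (σ 0) = 1 := by
        have hq1 := hσμν 0
        rw [hμ', hν'] at hq1
        simpa [hσ0] using hq1
      have q2 : ν (σ⁻¹ 0) = 1 := by
        have hq2 := hσμν (σ⁻¹ 0)
        rw [Equiv.Perm.inv_def, Equiv.apply_symm_apply, hμ', hν'] at hq2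
        simpa [show σ.symm 0 ≠ 0 from hi] using hq2.symm
      rw [q1, q2]
    · have e1 : (σ * Equiv.swap 0 (σ⁻¹ 0)) i = σ i := by
        rw [Equiv.Perm.mul_apply, Equiv.swap_apply_of_ne_of_ne hi hiσ]
      rw [e1]
      have hσi : σ i ≠ 0 := fun h => hiσ (Equiv.Perm.inv_eq_iff_eq.mpr h.symm).symm
      have q := hσμν i
      rw [hμ', hν'] at q
      simpa [if_neg hσi, if_neg hi] using q
end

section
/- Let n > 1, K algebraically closed, and let ξ be a primitive m-th root of unity. Then for any (t_1,...,t_n) ∈ ℤ^n with gcd(t_1,...,t_n, m) = 1, there exists a matrix M ∈ GL(n,ℤ) with M·(t_1,...,t_n) ≡ (1, 0, ..., 0) (mod m). Consequently any two diagonal automorphisms of K^n of the same finite order m are conjugate by a monomial map T(M), M ∈ GL(n,ℤ), inside the Cremona group Bir(K^n). -/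
open Matrix

noncomputable def glOfEquiv {n : ℕ} (e : (Fin n → ℤ) ≃ₗ[ℤ] (Fin n → ℤ)) :
    Matrix.GeneralLinearGroup (Fin n) ℤ :=
  ⟨LinearMap.toMatrix' (e : (Fin n → ℤ) →ₗ[ℤ] (Fin n → ℤ)),
   LinearMap.toMatrix' (e.symm : (Fin n → ℤ) →ₗ[ℤ] (Fin n → ℤ)),
   by rw [← LinearMap.toMatrix'_comp]; simp,
   by rw [← LinearMap.toMatrix'_comp]; simp⟩

lemma glOfEquiv_mulVec {n : ℕ} (e : (Fin n → ℤ) ≃ₗ[ℤ] (Fin n → ℤ)) (v : Fin n → ℤ) :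
    ((glOfEquiv e : Matrix.GeneralLinearGroup (Fin n) ℤ) : Matrix (Fin n) (Fin n) ℤ).mulVec v
      = e v := by
  show (LinearMap.toMatrix' (e : (Fin n → ℤ) →ₗ[ℤ] (Fin n → ℤ))).mulVec v = _
  rw [← Matrix.toLin'_apply, Matrix.toLin'_toMatrix']
  rfl

lemma exists_gl_single {n : ℕ} (hn0 : 0 < n) (t : Fin n → ℤ) (ht : t ≠ 0) :
    ∃ (M : Matrix.GeneralLinearGroup (Fin n) ℤ) (a : ℤ),
      (∀ i, a ∣ t i) ∧
      ((M : Matrix (Fin n) (Fin n) ℤ).mulVec t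
        = fun i => if i = (⟨0, hn0⟩ : Fin n) then a else 0) := by
  classical
  set N : Submodule ℤ (Fin n → ℤ) := Submodule.span ℤ {t} with hN
  obtain ⟨k, snf⟩ := N.smithNormalForm (Pi.basisFun ℤ (Fin n))
  have htN : t ∈ N := Submodule.mem_span_singleton_self t
  -- N has a basis indexed by Fin 1
  have hli : LinearIndependent ℤ (fun _ : Fin 1 => t) :=
    linearIndependent_unique_iff.mpr ht
  have hrange : Set.range (fun _ : Fin 1 => t) = {t} := Set.range_const
  let b1 : Module.Basis (Fin 1) ℤ N :=
    (Module.Basis.span hli).map (LinearEquiv.ofEq _ _ (by rw [hrange]))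
  have hk : k = 1 := by
    have h1 := Module.finrank_eq_card_basis snf.bN
    have h2 := Module.finrank_eq_card_basis b1
    have : (1:ℕ) = k := by simpa [h1] using h2.symm
    omega
  subst hk
  -- express t in the basis bN
  set T : N := ⟨t, htN⟩ with hT
  have hTrepr : (T : Fin n → ℤ) = (snf.bN.repr T 0) • ((snf.bN 0 : N) : Fin n → ℤ) := by
    conv_lhs => rw [← snf.bN.sum_repr T]
    simp [Fin.sum_univ_one]
  have hteq : t = (snf.bN.repr T 0 * snf.a 0) • snf.bM (snf.f 0) := by
    have := snf.snf 0
    rw [hT] at hTrepr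
    simp only at hTrepr
    rw [hTrepr, this, smul_smul]
  set a : ℤ := snf.bN.repr T 0 * snf.a 0
  set j : Fin n := snf.f 0
  set i0 : Fin n := ⟨0, hn0⟩
  set b' := snf.bM.reindex (Equiv.swap j i0) with hb'
  refine ⟨glOfEquiv b'.equivFun, a, ?_, ?_⟩
  · intro i
    refine ⟨snf.bM j i, ?_⟩
    have := congrFun hteq i
    simpa using this
  · rw [glOfEquiv_mulVec]
    funext i
    have hrepr : b'.repr t = Finsupp.single i0 a := by
      rw [hb', Module.Basis.repr_reindex, hteq, _root_.map_smul, Module.Basis.repr_self]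
      simp [Finsupp.mapDomain_single, Equiv.swap_apply_left]
    rw [Module.Basis.equivFun_apply, hrepr]
    simp [Finsupp.single_apply, eq_comm]

noncomputable def glTransvection {n : ℕ} {i j : Fin n} (hij : i ≠ j) (c : ℤ) :
    Matrix.GeneralLinearGroup (Fin n) ℤ :=
  ⟨Matrix.transvection i j c, Matrix.transvection i j (-c),
   by rw [Matrix.transvection_mul_transvection_same (R := ℤ) (i := i) (j := j) hij c (-c)]; simp,
   by rw [Matrix.transvection_mul_transvection_same (R := ℤ) (i := i) (j := j) hij (-c) c]; simp⟩

lemma glTransvection_coe {n : ℕ} {i j : Fin n} (hij : i ≠ j) (c : ℤ) :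
    ((glTransvection hij c : Matrix.GeneralLinearGroup (Fin n) ℤ) : Matrix (Fin n) (Fin n) ℤ)
      = Matrix.transvection i j c := rfl

lemma transvection_mulVec {n : ℕ} (i j : Fin n) (c : ℤ) (v : Fin n → ℤ) (k : Fin n) :
    (Matrix.transvection i j c).mulVec v k = v k + (if k = i then c * v j else 0) := by
  rw [Matrix.transvection, Matrix.add_mulVec, Matrix.one_mulVec, Matrix.single_mulVec]
  rcases eq_or_ne k i with rfl | h
  · simp
  · simp [Function.update_of_ne h, h]

lemma part_one {n : ℕ} (hn : 1 < n) (m : ℕ) (hm : 0 < m)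
    (t : Fin n → ℤ) (h : Int.gcd (Finset.univ.gcd t) m = 1) :
    ∃ M : Matrix.GeneralLinearGroup (Fin n) ℤ,
      ∀ i : Fin n,
        ((M : Matrix (Fin n) (Fin n) ℤ).mulVec t i) ≡
          (if i = (⟨0, by omega⟩ : Fin n) then 1 else 0) [ZMOD m] := by
  by_cases ht : t = 0
  · have hm1 : m = 1 := by
      subst ht
      have h0 : Finset.univ.gcd (0 : Fin n → ℤ) = 0 :=
        Finset.gcd_eq_zero_iff.mpr (by simp)
      rw [h0, Int.gcd_zero_left] at h
      simpa using h
    subst hm1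
    exact ⟨1, fun i => by simpa using Int.modEq_one⟩
  · obtain ⟨M₁, a, hdvd, hmv⟩ := exists_gl_single (by omega) t ht
    set i0 : Fin n := ⟨0, by omega⟩ with hi0
    set i1 : Fin n := ⟨1, hn⟩ with hi1
    have h01 : i0 ≠ i1 := by simp [hi0, hi1, Fin.ext_iff]
    have h10 : i1 ≠ i0 := h01.symm
    have hgcd : Int.gcd a m = 1 := by
      have h1 : a ∣ Finset.univ.gcd t := Finset.dvd_gcd (fun i _ => hdvd i)
      have h2 : (Int.gcd a m : ℤ) ∣ (Int.gcd (Finset.univ.gcd t) m : ℤ) :=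
        Int.dvd_coe_gcd (dvd_trans (Int.gcd_dvd_left _ _) h1) (Int.gcd_dvd_right _ _)
      rw [h] at h2
      exact Nat.dvd_one.mp (Int.natCast_dvd_natCast.mp (by exact_mod_cast h2))
    set x : ℤ := Int.gcdA a m with hxdef
    have hax : ((a : ZMod m)) * ((x : ZMod m)) = 1 := by
      have hbez := Int.gcd_eq_gcd_ab a (m : ℤ)
      rw [hgcd] at hbez
      have : ((1 : ℤ) : ZMod m) = ((a * x + m * Int.gcdB a m : ℤ) : ZMod m) := by
        rw [← hbez]; norm_cast
      push_cast at this
      simpa [ZMod.natCast_self] using this.symm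
    refine ⟨glTransvection h10 (-1) * glTransvection h01 (1 - a) * glTransvection h10 x * M₁,
      fun i => ?_⟩
    rw [← ZMod.intCast_eq_intCast_iff]
    have hco : (((glTransvection h10 (-1) * glTransvection h01 (1 - a) * glTransvection h10 x
        * M₁ : Matrix.GeneralLinearGroup (Fin n) ℤ)) : Matrix (Fin n) (Fin n) ℤ).mulVec t
        = (Matrix.transvection i1 i0 (-1)).mulVec
            ((Matrix.transvection i0 i1 (1 - a)).mulVec
              ((Matrix.transvection i1 i0 x).mulVec
                ((M₁ : Matrix (Fin n) (Fin n) ℤ).mulVec t))) := by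
      simp only [Units.val_mul, glTransvection_coe, Matrix.mulVec_mulVec, mul_assoc]
    rw [hco, hmv]
    set v0 : Fin n → ℤ := fun i => if i = i0 then a else 0 with hv0
    have hv1 : ∀ k, (Matrix.transvection i1 i0 x).mulVec v0 k
        = (if k = i0 then a else 0) + (if k = i1 then x * a else 0) := by
      intro k
      rw [transvection_mulVec]
      simp [hv0]
    set v1 : Fin n → ℤ := (Matrix.transvection i1 i0 x).mulVec v0 with hv1def
    have hv2 : ∀ k, (Matrix.transvection i0 i1 (1 - a)).mulVec v1 k
        = v1 k + (if k = i0 then (1 - a) * (x * a) else 0) := by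
      intro k
      rw [transvection_mulVec]
      rw [hv1 i1]
      simp [h10]
    set v2 : Fin n → ℤ := (Matrix.transvection i0 i1 (1 - a)).mulVec v1 with hv2def
    have hv3 : ∀ k, (Matrix.transvection i1 i0 (-1)).mulVec v2 k
        = v2 k + (if k = i1 then -(v2 i0) else 0) := by
      intro k
      rw [transvection_mulVec]
      rcases eq_or_ne k i1 with rfl | hk
      · simp
      · simp [hk]
    rw [hv3 i]
    rcases eq_or_ne i i0 with rfl | hki0
    · rw [if_neg h01, add_zero, hv2 i0, if_pos rfl, hv1 i0, if_pos rfl, if_neg h01]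
      push_cast
      rw [mul_comm (x : ZMod m) (a : ZMod m), hax]
      simp
    · rcases eq_or_ne i i1 with rfl | hki1
      · rw [if_pos rfl, hv2 i1, if_neg h10, hv2 i0, if_pos rfl, hv1 i1, hv1 i0,
          if_neg h10, if_pos rfl, if_pos rfl, if_neg h01, if_neg h10]
        push_cast
        rw [mul_comm (x : ZMod m) (a : ZMod m), hax]
        ring
      · rw [if_neg hki1, add_zero, hv2 i, if_neg hki0, hv1 i, if_neg hki0, if_neg hki1,
          if_neg hki0]
        simp

lemma zpow_finset_sum {G : Type*} [CommGroup G] (g : G) {ι : Type*} (s : Finset ι)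
    (f : ι → ℤ) : g ^ (∑ j ∈ s, f j) = ∏ j ∈ s, g ^ f j := by
  classical
  induction s using Finset.induction with
  | empty => simp
  | insert _ _ h ih => rw [Finset.sum_insert h, Finset.prod_insert h, _root_.zpow_add, ih]

lemma exists_exponents {K : Type*} [Field K] {n m : ℕ} [NeZero m]
    {ξ : Kˣ} (hξ : IsPrimitiveRoot ξ m) (μ : Fin n → Kˣ) (hμ : orderOf μ = m) :
    ∃ t : Fin n → ℤ, (∀ i, μ i = ξ ^ t i) ∧ Int.gcd (Finset.univ.gcd t) m = 1 := by
  classical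
  have hm : 0 < m := NeZero.pos m
  have hpow : ∀ i, (μ i) ^ m = 1 := by
    intro i
    have : μ ^ m = 1 := by rw [← hμ]; exact pow_orderOf_eq_one μ
    calc (μ i) ^ m = (μ ^ m) i := by simp [Pi.pow_apply]
    _ = 1 := by rw [this]; rfl
  have hex : ∀ i, ∃ c : ℤ, ξ ^ c = μ i := by
    intro i
    obtain ⟨c, _, hc⟩ := hξ.eq_pow_of_mem_rootsOfUnity
      ((mem_rootsOfUnity m (μ i)).mpr (hpow i))
    exact ⟨(c : ℤ), by rw [zpow_natCast, hc]⟩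
  choose t htp using hex
  refine ⟨t, fun i => (htp i).symm, ?_⟩
  set d : ℕ := Int.gcd (Finset.univ.gcd t) m with hd
  have hdm : d ∣ m := by
    have : (d : ℤ) ∣ (m : ℤ) := Int.gcd_dvd_right _ _
    exact_mod_cast this
  obtain ⟨e, he⟩ := hdm
  have he0 : 0 < e := by
    rcases Nat.eq_zero_or_pos e with h0 | h0
    · exfalso; rw [h0, Nat.mul_zero] at he; omega
    · exact h0
  have hme : μ ^ e = 1 := by
    funext i
    have hdt : (d : ℤ) ∣ t i :=
      dvd_trans (Int.gcd_dvd_left _ _) (Finset.gcd_dvd (Finset.mem_univ i))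
    obtain ⟨c, hc⟩ := hdt
    have : (μ ^ e) i = (μ i) ^ e := by simp [Pi.pow_apply]
    rw [this, ← htp i, ← zpow_natCast (ξ ^ t i) e, ← _root_.zpow_mul, hc]
    have : (d : ℤ) * c * (e : ℤ) = c * ((m : ℕ) : ℤ) := by
      rw [he]; push_cast; ring
    rw [this, mul_comm c ((m : ℕ) : ℤ), _root_.zpow_mul, zpow_natCast, hξ.pow_eq_one, _root_.one_zpow]
    rfl
  have hmdvd : m ∣ e := by
    rw [← hμ]
    exact orderOf_dvd_of_pow_eq_one hme
  have hem : e = m := Nat.dvd_antisymm (Dvd.intro_left d he.symm) hmdvd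
  rw [hem] at he
  have : d * m = 1 * m := by rw [one_mul, ← he]
  exact Nat.eq_of_mul_eq_mul_right hm this

lemma cast_mulVec {n m : ℕ} (A : Matrix (Fin n) (Fin n) ℤ) (v : Fin n → ℤ) :
    (fun i => ((A.mulVec v i : ℤ) : ZMod m))
      = (A.map (Int.castRingHom (ZMod m))).mulVec (fun j => ((v j : ℤ) : ZMod m)) := by
  funext i
  simp only [Matrix.mulVec, dotProduct, Matrix.map_apply, Int.coe_castRingHom]
  push_cast
  rfl

/-- For `n > 1` and `K` algebraically closed: any exponent vector `t` with
`gcd(t₁,...,tₙ,m) = 1` can be mapped by a matrix `M ∈ GL(n,ℤ)` to `(1,0,...,0)` modulo `m`;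
consequently any two diagonal automorphisms of `K^n` of the same finite order `m`
are conjugate by a monomial map `T(M)`, `M ∈ GL(n,ℤ)`, inside `Bir(K^n)`. -/
theorem diagonal_same_finite_order_conj {K : Type*} [Field K] [IsAlgClosed K] [CharZero K]
    {n : ℕ} (hn : 1 < n) (m : ℕ) (hm : 0 < m) :
    (∀ t : Fin n → ℤ, Int.gcd (Finset.univ.gcd t) m = 1 →
      ∃ M : Matrix.GeneralLinearGroup (Fin n) ℤ,
        ∀ i : Fin n,
          ((M : Matrix (Fin n) (Fin n) ℤ).mulVec t i) ≡
            (if i = (⟨0, by omega⟩ : Fin n) then 1 else 0) [ZMOD m]) ∧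
    (∀ μ ν : Fin n → Kˣ, orderOf μ = m → orderOf ν = m →
      ∃ M : Matrix.GeneralLinearGroup (Fin n) ℤ,
        ∀ i : Fin n, ν i = ∏ j, μ j ^ (M : Matrix (Fin n) (Fin n) ℤ) i j) := by
  constructor
  · intro t h
    exact part_one hn m hm t h
  · intro μ ν hμ hν
    have hmz : NeZero m := ⟨hm.ne'⟩
    have hK : NeZero ((m : ℕ) : K) := ⟨Nat.cast_ne_zero.mpr hm.ne'⟩
    obtain ⟨ζ, hζ⟩ := HasEnoughRootsOfUnity.exists_primitiveRoot K m
    have hξ : IsPrimitiveRoot ((hζ.isUnit hm.ne').unit) m := hζ.isUnit_unit hm.ne'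
    set ξ : Kˣ := (hζ.isUnit hm.ne').unit with hXi
    obtain ⟨t, htμ, htg⟩ := exists_exponents hξ μ hμ
    obtain ⟨s, hsν, hsg⟩ := exists_exponents hξ ν hν
    obtain ⟨M₁, hM₁⟩ := part_one hn m hm t htg
    obtain ⟨M₂, hM₂⟩ := part_one hn m hm s hsg
    refine ⟨M₂⁻¹ * M₁, fun i => ?_⟩
    set Mc : Matrix (Fin n) (Fin n) ℤ :=
      ((M₂⁻¹ * M₁ : Matrix.GeneralLinearGroup (Fin n) ℤ) : Matrix (Fin n) (Fin n) ℤ) with hMc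
    have hRHS : (∏ j, μ j ^ Mc i j) = ξ ^ (Mc.mulVec t i) := by
      have hw : Mc.mulVec t i = ∑ j, Mc i j * t j := rfl
      rw [hw, zpow_finset_sum]
      refine Finset.prod_congr rfl fun j _ => ?_
      rw [htμ j, ← _root_.zpow_mul, mul_comm (t j) (Mc i j)]
    -- congruences in ZMod m
    have key : (fun i => ((Mc.mulVec t i : ℤ) : ZMod m)) = fun i => ((s i : ℤ) : ZMod m) := by
      have h1 : (fun i => (((M₁ : Matrix (Fin n) (Fin n) ℤ).mulVec t i : ℤ) : ZMod m))
          = fun i => (((M₂ : Matrix (Fin n) (Fin n) ℤ).mulVec s i : ℤ) : ZMod m) := by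
        funext i
        rw [(ZMod.intCast_eq_intCast_iff _ _ _).mpr (hM₁ i),
          (ZMod.intCast_eq_intCast_iff _ _ _).mpr (hM₂ i)]
      have hsplit : Mc = ((M₂⁻¹ : Matrix.GeneralLinearGroup (Fin n) ℤ) : Matrix (Fin n) (Fin n) ℤ)
          * ((M₁ : Matrix.GeneralLinearGroup (Fin n) ℤ) : Matrix (Fin n) (Fin n) ℤ) := by
        rw [hMc]; rfl
      rw [cast_mulVec, hsplit, Matrix.map_mul, ← Matrix.mulVec_mulVec, ← cast_mulVec, h1,
        cast_mulVec, Matrix.mulVec_mulVec, ← Matrix.map_mul]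
      have hone : ((M₂⁻¹ : Matrix.GeneralLinearGroup (Fin n) ℤ) : Matrix (Fin n) (Fin n) ℤ)
          * ((M₂ : Matrix.GeneralLinearGroup (Fin n) ℤ) : Matrix (Fin n) (Fin n) ℤ) = 1 := by
        rw [← Matrix.GeneralLinearGroup.coe_mul, inv_mul_cancel]
        rfl
      rw [hone, Matrix.map_one _ (map_zero _) (map_one _), Matrix.one_mulVec]
    have hdvd : ((m : ℕ) : ℤ) ∣ (Mc.mulVec t i - s i) := by
      have := congrFun key i
      exact Int.ModEq.dvd ((ZMod.intCast_eq_intCast_iff _ _ _).mp this).symm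
    rw [hsν i, hRHS]
    obtain ⟨c, hc⟩ := hdvd
    have hwi : Mc.mulVec t i = s i + ((m : ℕ) : ℤ) * c := by omega
    rw [hwi, _root_.zpow_add, _root_.zpow_mul, zpow_natCast, hξ.pow_eq_one, _root_.one_zpow,
      mul_one]
end

section
/- A diagonal automorphism of K^n is never conjugate in the Cremona group Bir(K^n) to an almost-diagonal automorphism: if θ_λ: x ↦ (x_1+1, λ_2 x_2,...,λ_n x_n) and ρ_μ: x ↦ (μ_1 x_1,...,μ_n x_n) satisfy π ∘ θ_λ = ρ_μ ∘ π for some birational map π of K^n, a contradiction follows. -/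
set_option maxHeartbeats 1000000
set_option synthInstance.maxHeartbeats 200000

open MvPolynomial

section Aux

variable {K : Type*} [Field K]

/-- Coefficient of a diagonal substitution. -/
lemma diag_coeff {m : ℕ} (l : Fin m → K) (x : MvPolynomial (Fin m) K) (α : Fin m →₀ ℕ) :
    coeff α (aeval (fun i => C (l i) * X i) x) =
      (α.prod fun i e => l i ^ e) * coeff α x := by
  induction x using MvPolynomial.induction_on generalizing α with
  | C a =>
      classical
      rw [aeval_C, show (algebraMap K (MvPolynomial (Fin m) K)) a = C a from rfl, coeff_C]
      split_ifs with h
      · rw [← h, Finsupp.prod_zero_index, one_mul]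
      · rw [mul_zero]
  | add p q hp hq => rw [map_add, MvPolynomial.coeff_add, MvPolynomial.coeff_add, hp, hq, mul_add]
  | mul_X p i hp =>
      classical
      rw [map_mul, aeval_X, show (aeval fun i => C (l i) * X i) p * (C (l i) * X i)
          = C (l i) * ((aeval fun i => C (l i) * X i) p * X i) by ring,
        coeff_C_mul, coeff_mul_X', coeff_mul_X']
      by_cases hi : i ∈ α.support
      · rw [if_pos hi, if_pos hi, hp]
        have hα : (α - Finsupp.single i 1) + Finsupp.single i 1 = α := by
          ext j
          by_cases hj : j = i
          · subst hj
            have : α j ≠ 0 := Finsupp.mem_support_iff.mp hi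
            simp only [Finsupp.add_apply, Finsupp.tsub_apply, Finsupp.single_eq_same]
            omega
          · simp [Finsupp.single_apply, Ne.symm hj, hj]
        have hprod : (α.prod fun i e => l i ^ e)
            = ((α - Finsupp.single i 1).prod fun i e => l i ^ e) * l i := by
          conv_lhs => rw [← hα]
          rw [Finsupp.prod_add_index' (fun a => pow_zero _) (fun a b c => pow_add _ _ _)]
          simp [Finsupp.prod_single_index]
        rw [hprod]; ring
      · rw [if_neg hi, if_neg hi, mul_zero, mul_zero]

/-- Coefficients of a polynomial composed with `X + 1`. -/
lemma comp_coeff {A : Type*} [CommRing A] (Q : Polynomial A) (N k : ℕ)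
    (hN : Q.natDegree < N) :
    (Polynomial.aeval (Polynomial.X + 1 : Polynomial A) Q).coeff k
      = ∑ j ∈ Finset.range N, Q.coeff j * (j.choose k : A) := by
  rw [Polynomial.aeval_def, Polynomial.eval₂_eq_sum_range' _ hN, Polynomial.finset_sum_coeff]
  refine Finset.sum_congr rfl fun j _ => ?_
  rw [Polynomial.algebraMap_eq, Polynomial.coeff_C_mul, Polynomial.coeff_X_add_one_pow]

lemma finSuccEquiv_C' {m : ℕ} (a : K) :
    finSuccEquiv K m (C a) = Polynomial.C (C a) := by
  simp [finSuccEquiv_apply]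

lemma finSuccEquiv_rename {m : ℕ} (a : MvPolynomial (Fin m) K) :
    finSuccEquiv K m (rename Fin.succ a) = Polynomial.C a := by
  have h : ((finSuccEquiv K m).toAlgHom.comp (rename Fin.succ) :
        MvPolynomial (Fin m) K →ₐ[K] Polynomial (MvPolynomial (Fin m) K))
      = IsScalarTower.toAlgHom K (MvPolynomial (Fin m) K)
          (Polynomial (MvPolynomial (Fin m) K)) := by
    apply MvPolynomial.algHom_ext
    intro i
    simp only [AlgHom.coe_comp, AlgEquiv.toAlgHom_eq_coe, AlgHom.coe_coe, AlgEquiv.coe_toAlgHom, Function.comp_apply,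
      rename_X, finSuccEquiv_X_succ, IsScalarTower.coe_toAlgHom', Polynomial.algebraMap_eq]
  have := AlgHom.congr_fun h a
  simpa [Polynomial.algebraMap_eq] using this

lemma mv_isUnit_eq_C {m : ℕ} (w : MvPolynomial (Fin m) K) (hw : IsUnit w) :
    ∃ k : K, w = C k := by
  induction m with
  | zero => exact ⟨w.coeff 0, eq_C_of_isEmpty w⟩
  | succ m ih =>
      have h1 : IsUnit (finSuccEquiv K m w) := hw.map _
      obtain ⟨r, hr, hrw⟩ := Polynomial.isUnit_iff.mp h1
      obtain ⟨k, rfl⟩ := ih r hr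
      refine ⟨k, (finSuccEquiv K m).injective ?_⟩
      rw [finSuccEquiv_C', ← hrw]

/-- A polynomial eigenvector of the almost-diagonal substitution does not involve `X 0`. -/
lemma main_poly [CharZero K] {m : ℕ} (l : Fin (m + 1) → K) (c : K) (hc : c ≠ 0)
    (p : MvPolynomial (Fin (m + 1)) K)
    (hp : aeval (fun i => if i = 0 then X 0 + 1 else C (l i) * X i) p = C c * p) :
    ∃ q : MvPolynomial (Fin m) K, p = rename Fin.succ q := by
  set σ' : (MvPolynomial (Fin m) K) →ₐ[K] (MvPolynomial (Fin m) K) := aeval (fun i : Fin m => C (l i.succ) * X i) with hσ'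
  set Φ := finSuccEquiv K m with hΦ
  have key : ∀ r, Φ (aeval (fun i => if i = 0 then X 0 + 1 else C (l i) * X i) r)
      = Polynomial.aeval (Polynomial.X + 1 : Polynomial (MvPolynomial (Fin m) K))
          ((Φ r).map (σ' : (MvPolynomial (Fin m) K) →+* (MvPolynomial (Fin m) K))) := by
    intro r
    have h : (Φ.toAlgHom.comp (aeval (fun i => if i = 0 then X 0 + 1 else C (l i) * X i)))
        = (((Polynomial.aeval (Polynomial.X + 1 : Polynomial (MvPolynomial (Fin m) K))).restrictScalars K).comp
            ((Polynomial.mapAlgHom σ').comp Φ.toAlgHom)) := by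
      apply MvPolynomial.algHom_ext
      intro i
      refine Fin.cases ?_ (fun j => ?_) i
      · simp only [AlgHom.coe_comp, AlgEquiv.toAlgHom_eq_coe, AlgHom.coe_coe, AlgEquiv.coe_toAlgHom,
          Function.comp_apply, aeval_X, AlgHom.coe_restrictScalars',
          Polynomial.coe_mapAlgHom]
        simp only [if_true]
        rw [hΦ, map_add, map_one, finSuccEquiv_X_zero]
        simp
      · simp only [AlgHom.coe_comp, AlgEquiv.toAlgHom_eq_coe, AlgHom.coe_coe, AlgEquiv.coe_toAlgHom,
          Function.comp_apply, aeval_X, AlgHom.coe_restrictScalars',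
          Polynomial.coe_mapAlgHom]
        rw [if_neg (Fin.succ_ne_zero j), hΦ, map_mul, finSuccEquiv_C', finSuccEquiv_X_succ,
          Polynomial.map_C, Polynomial.aeval_C, Polynomial.algebraMap_eq]
        simp only [AlgHom.coe_toRingHom, hσ', aeval_X, map_mul]
    have := AlgHom.congr_fun h r
    simpa [Polynomial.coe_mapAlgHom] using this
  have hp' : Polynomial.aeval (Polynomial.X + 1 : Polynomial (MvPolynomial (Fin m) K))
      ((Φ p).map (σ' : (MvPolynomial (Fin m) K) →+* (MvPolynomial (Fin m) K))) = Polynomial.C (C c) * Φ p := by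
    rw [← key, hp, map_mul, finSuccEquiv_C']
  set P := Φ p with hP
  set Q := P.map (σ' : (MvPolynomial (Fin m) K) →+* (MvPolynomial (Fin m) K)) with hQdef
  have hE : ∀ k, ∑ j ∈ Finset.range (P.natDegree + 1), Q.coeff j * (j.choose k : (MvPolynomial (Fin m) K))
      = C c * P.coeff k := by
    intro k
    have hdeg : Q.natDegree < P.natDegree + 1 :=
      lt_of_le_of_lt Polynomial.natDegree_map_le (Nat.lt_succ_self _)
    rw [← comp_coeff Q (P.natDegree + 1) k hdeg, hp', Polynomial.coeff_C_mul]
  by_cases hd : P.natDegree = 0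
  · refine ⟨P.coeff 0, ?_⟩
    apply (finSuccEquiv K m).injective
    rw [finSuccEquiv_rename, ← hΦ, ← hP]
    exact Polynomial.eq_C_of_natDegree_eq_zero hd
  · exfalso
    obtain ⟨d', hd'⟩ : ∃ d', P.natDegree = d' + 1 :=
      ⟨P.natDegree - 1, (Nat.succ_pred_eq_of_pos (Nat.pos_of_ne_zero hd)).symm⟩
    have hP0 : P ≠ 0 := fun h => hd (by simp [h])
    have ha : P.coeff (d' + 1) ≠ 0 := by
      rw [← hd', ← Polynomial.leadingCoeff]
      exact Polynomial.leadingCoeff_ne_zero.mpr hP0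
    have e1 : σ' (P.coeff (d' + 1)) = C c * P.coeff (d' + 1) := by
      have h := hE (d' + 1)
      rw [hd', Finset.sum_range_succ] at h
      have hz : ∑ j ∈ Finset.range (d' + 1), Q.coeff j * ((j.choose (d' + 1) : ℕ) : (MvPolynomial (Fin m) K)) = 0 :=
        Finset.sum_eq_zero fun j hj => by
          rw [Nat.choose_eq_zero_of_lt (Finset.mem_range.mp hj), Nat.cast_zero, mul_zero]
      rw [hz, zero_add, Nat.choose_self, Nat.cast_one, mul_one] at h
      rwa [hQdef, Polynomial.coeff_map] at h
    have e2 : σ' (P.coeff d') + σ' (P.coeff (d' + 1)) * ((d' + 1 : ℕ) : (MvPolynomial (Fin m) K))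
        = C c * P.coeff d' := by
      have h := hE d'
      rw [hd', Finset.sum_range_succ, Finset.sum_range_succ] at h
      have hz : ∑ j ∈ Finset.range d', Q.coeff j * ((j.choose d' : ℕ) : (MvPolynomial (Fin m) K)) = 0 :=
        Finset.sum_eq_zero fun j hj => by
          rw [Nat.choose_eq_zero_of_lt (Finset.mem_range.mp hj), Nat.cast_zero, mul_zero]
      rw [hz, zero_add, Nat.choose_self, Nat.cast_one, mul_one,
        Nat.choose_succ_self_right] at h
      rwa [hQdef, Polynomial.coeff_map, Polynomial.coeff_map] at h
    have hsupp : (P.coeff (d' + 1)).support.Nonempty := by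
      rw [Finset.nonempty_iff_ne_empty, ne_eq, MvPolynomial.support_eq_empty]
      exact ha
    obtain ⟨α, hα⟩ := hsupp
    have haα : coeff α (P.coeff (d' + 1)) ≠ 0 := MvPolynomial.mem_support_iff.mp hα
    set L := α.prod fun i e => l i.succ ^ e with hLdef
    have hL : L * coeff α (P.coeff (d' + 1)) = c * coeff α (P.coeff (d' + 1)) := by
      have h := congrArg (coeff α) e1
      rwa [hσ', diag_coeff, coeff_C_mul] at h
    have hLc : L = c := mul_right_cancel₀ haα hL
    have h2 : L * coeff α (P.coeff d') + (L * coeff α (P.coeff (d' + 1))) * ((d' + 1 : ℕ) : K)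
        = c * coeff α (P.coeff d') := by
      have h := congrArg (coeff α) e2
      rw [MvPolynomial.coeff_add, ← MvPolynomial.C_eq_coe_nat,
        mul_comm (σ' (P.coeff (d' + 1))) (C ((d' + 1 : ℕ) : K)),
        coeff_C_mul, hσ', diag_coeff, diag_coeff, coeff_C_mul] at h
      rw [← h, ← hLdef]
      push_cast
      ring
    rw [hLc] at h2
    have : c * coeff α (P.coeff (d' + 1)) * ((d' + 1 : ℕ) : K) = 0 := by
      linear_combination h2
    rcases mul_eq_zero.mp this with h3 | h3
    · exact (mul_ne_zero hc haα) h3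
    · exact (Nat.cast_ne_zero (R := K)).mpr (Nat.succ_ne_zero d') h3

end Aux

section Main

variable {K : Type*} [Field K] [CharZero K] {m : ℕ}

/-- The subfield predicate: `x` is a fraction of polynomials not involving `X 0`. -/
def SP (x : FractionRing (MvPolynomial (Fin (m + 1)) K)) : Prop :=
  ∃ a b : MvPolynomial (Fin m) K,
    algebraMap (MvPolynomial (Fin (m + 1)) K) (FractionRing (MvPolynomial (Fin (m + 1)) K))
        (rename Fin.succ b) ≠ 0 ∧
    x * algebraMap (MvPolynomial (Fin (m + 1)) K) (FractionRing (MvPolynomial (Fin (m + 1)) K))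
        (rename Fin.succ b)
      = algebraMap (MvPolynomial (Fin (m + 1)) K) (FractionRing (MvPolynomial (Fin (m + 1)) K))
        (rename Fin.succ a)

lemma SP_add {x y : FractionRing (MvPolynomial (Fin (m + 1)) K)} (hx : SP x) (hy : SP y) :
    SP (x + y) := by
  obtain ⟨a1, b1, hb1, h1⟩ := hx
  obtain ⟨a2, b2, hb2, h2⟩ := hy
  refine ⟨a1 * b2 + a2 * b1, b1 * b2, ?_, ?_⟩
  · rw [map_mul, map_mul]
    exact mul_ne_zero hb1 hb2
  · simp only [map_add, map_mul]
    linear_combination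
      (algebraMap (MvPolynomial (Fin (m + 1)) K) (FractionRing (MvPolynomial (Fin (m + 1)) K))
        (rename Fin.succ b2)) * h1 +
      (algebraMap (MvPolynomial (Fin (m + 1)) K) (FractionRing (MvPolynomial (Fin (m + 1)) K))
        (rename Fin.succ b1)) * h2

lemma SP_mul {x y : FractionRing (MvPolynomial (Fin (m + 1)) K)} (hx : SP x) (hy : SP y) :
    SP (x * y) := by
  obtain ⟨a1, b1, hb1, h1⟩ := hx
  obtain ⟨a2, b2, hb2, h2⟩ := hy
  refine ⟨a1 * a2, b1 * b2, ?_, ?_⟩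
  · rw [map_mul, map_mul]
    exact mul_ne_zero hb1 hb2
  · simp only [map_mul]
    linear_combination
      y * (algebraMap (MvPolynomial (Fin (m + 1)) K) (FractionRing (MvPolynomial (Fin (m + 1)) K))
        (rename Fin.succ b2)) * h1 +
      (algebraMap (MvPolynomial (Fin (m + 1)) K) (FractionRing (MvPolynomial (Fin (m + 1)) K))
        (rename Fin.succ a1)) * h2

lemma SP_C (k : K) : SP (algebraMap K (FractionRing (MvPolynomial (Fin (m + 1)) K)) k) := by
  refine ⟨C k, 1, ?_, ?_⟩
  · rw [map_one, map_one]
    exact one_ne_zero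
  · rw [map_one, map_one, mul_one, rename_C,
      IsScalarTower.algebraMap_apply K (MvPolynomial (Fin (m + 1)) K)
        (FractionRing (MvPolynomial (Fin (m + 1)) K)) k, MvPolynomial.algebraMap_eq]

/-- An eigenvector of the almost-diagonal automorphism is a fraction of polynomials
not involving `X 0`. -/
lemma eigen_mem (lam : Fin (m + 1) → Kˣ)
    (θ : FractionRing (MvPolynomial (Fin (m + 1)) K) ≃ₐ[K]
          FractionRing (MvPolynomial (Fin (m + 1)) K))
    (hθ0 : θ (algebraMap (MvPolynomial (Fin (m + 1)) K) _ (X 0))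
        = algebraMap (MvPolynomial (Fin (m + 1)) K) _ (X 0) + 1)
    (hθ : ∀ i : Fin (m + 1), i ≠ 0 → θ (algebraMap (MvPolynomial (Fin (m + 1)) K) _ (X i))
        = (lam i : K) • algebraMap (MvPolynomial (Fin (m + 1)) K) _ (X i))
    (c : K) (hc : c ≠ 0) (f : FractionRing (MvPolynomial (Fin (m + 1)) K))
    (hf : θ f = c • f) : SP f := by
  classical
  set Θ : MvPolynomial (Fin (m + 1)) K →ₐ[K] MvPolynomial (Fin (m + 1)) K :=
    aeval (fun i => if i = 0 then X 0 + 1 else C ((lam i : K)) * X i) with hΘdef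
  set Θi : MvPolynomial (Fin (m + 1)) K →ₐ[K] MvPolynomial (Fin (m + 1)) K :=
    aeval (fun i => if i = 0 then X 0 - 1 else C ((((lam i)⁻¹ : Kˣ) : K)) * X i) with hΘidef
  have halgC : ∀ k : K,
      algebraMap (MvPolynomial (Fin (m + 1)) K) (FractionRing (MvPolynomial (Fin (m + 1)) K))
        (C k) = algebraMap K _ k := fun k => by
    rw [IsScalarTower.algebraMap_apply K (MvPolynomial (Fin (m + 1)) K)
      (FractionRing (MvPolynomial (Fin (m + 1)) K)) k, MvPolynomial.algebraMap_eq]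
  have hΘc : ∀ p, θ (algebraMap (MvPolynomial (Fin (m + 1)) K) _ p)
      = algebraMap (MvPolynomial (Fin (m + 1)) K) _ (Θ p) := by
    intro p
    have h : (θ.toAlgHom.comp (IsScalarTower.toAlgHom K (MvPolynomial (Fin (m + 1)) K)
          (FractionRing (MvPolynomial (Fin (m + 1)) K))))
        = ((IsScalarTower.toAlgHom K (MvPolynomial (Fin (m + 1)) K)
          (FractionRing (MvPolynomial (Fin (m + 1)) K))).comp Θ) := by
      apply MvPolynomial.algHom_ext
      intro i
      simp only [AlgHom.coe_comp, AlgEquiv.toAlgHom_eq_coe, AlgHom.coe_coe, AlgEquiv.coe_toAlgHom,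
        Function.comp_apply, IsScalarTower.coe_toAlgHom', hΘdef, aeval_X]
      by_cases hi : i = 0
      · subst hi
        rw [if_pos rfl, hθ0, map_add, map_one]
      · rw [if_neg hi, hθ i hi, map_mul, halgC, Algebra.smul_def]
    exact AlgHom.congr_fun h p
  have hΘΘi : ∀ p, Θ (Θi p) = p := by
    intro p
    have h : Θ.comp Θi = AlgHom.id K (MvPolynomial (Fin (m + 1)) K) := by
      apply MvPolynomial.algHom_ext
      intro i
      simp only [AlgHom.coe_comp, Function.comp_apply, AlgHom.id_apply, hΘdef, hΘidef, aeval_X]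
      by_cases hi : i = 0
      · subst hi
        rw [if_pos rfl, map_sub, map_one, aeval_X, if_pos rfl]
        ring
      · rw [if_neg hi, map_mul, aeval_X, if_neg hi, aeval_C, MvPolynomial.algebraMap_eq,
          ← mul_assoc, ← C_mul, Units.inv_mul, C_1, one_mul]
    exact AlgHom.congr_fun h p
  have hΘiΘ : ∀ p, Θi (Θ p) = p := by
    intro p
    have h : Θi.comp Θ = AlgHom.id K (MvPolynomial (Fin (m + 1)) K) := by
      apply MvPolynomial.algHom_ext
      intro i
      simp only [AlgHom.coe_comp, Function.comp_apply, AlgHom.id_apply, hΘdef, hΘidef, aeval_X]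
      by_cases hi : i = 0
      · subst hi
        rw [if_pos rfl, map_add, map_one, aeval_X, if_pos rfl]
        ring
      · rw [if_neg hi, map_mul, aeval_X, if_neg hi, aeval_C, MvPolynomial.algebraMap_eq,
          ← mul_assoc, ← C_mul, Units.mul_inv, C_1, one_mul]
    exact AlgHom.congr_fun h p
  have hΘic : ∀ p, θ.symm (algebraMap (MvPolynomial (Fin (m + 1)) K) _ p)
      = algebraMap (MvPolynomial (Fin (m + 1)) K) _ (Θi p) := by
    intro p
    rw [AlgEquiv.symm_apply_eq, hΘc, hΘΘi]
  by_cases hf0 : f = 0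
  · refine ⟨0, 1, ?_, ?_⟩
    · rw [map_one, map_one]; exact one_ne_zero
    · rw [hf0, zero_mul, map_zero, map_zero]
  set nu := IsFractionRing.num (MvPolynomial (Fin (m + 1)) K) f with hnudef
  set de := IsFractionRing.den (MvPolynomial (Fin (m + 1)) K) f with hdedef
  have hden0 : algebraMap (MvPolynomial (Fin (m + 1)) K)
      (FractionRing (MvPolynomial (Fin (m + 1)) K)) (de : MvPolynomial (Fin (m + 1)) K) ≠ 0 := by
    rw [map_ne_zero_iff _ (IsFractionRing.injective (MvPolynomial (Fin (m + 1)) K)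
      (FractionRing (MvPolynomial (Fin (m + 1)) K)))]
    exact mem_nonZeroDivisors_iff_ne_zero.mp de.2
  have hfd : f * algebraMap (MvPolynomial (Fin (m + 1)) K) _ (de : MvPolynomial (Fin (m + 1)) K)
      = algebraMap (MvPolynomial (Fin (m + 1)) K) _ nu := by
    conv_lhs => rw [← IsFractionRing.mk'_num_den' (MvPolynomial (Fin (m + 1)) K) f]
    rw [div_mul_cancel₀ _ hden0]
  have hnu0 : nu ≠ 0 := by
    intro h
    apply hf0
    rw [← IsFractionRing.mk'_num_den' (MvPolynomial (Fin (m + 1)) K) f, ← hnudef, h,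
      map_zero, zero_div]
  have hfs : θ.symm f = c⁻¹ • f := by
    have h := congrArg θ.symm hf
    rw [θ.symm_apply_apply, Algebra.smul_def, map_mul, AlgEquiv.commutes, ← Algebra.smul_def] at h
    have h2 : c⁻¹ • f = c⁻¹ • (c • θ.symm f) := by rw [← h]
    rw [smul_smul, inv_mul_cancel₀ hc, one_smul] at h2
    exact h2.symm
  have hsmul : ∀ (k : K) (x : FractionRing (MvPolynomial (Fin (m + 1)) K)),
      k • x = algebraMap (MvPolynomial (Fin (m + 1)) K) _ (C k) * x := by
    intro k x
    rw [halgC, Algebra.smul_def]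
  have eq1 : Θ nu * (de : MvPolynomial (Fin (m + 1)) K)
      = C c * (nu * Θ (de : MvPolynomial (Fin (m + 1)) K)) := by
    apply IsFractionRing.injective (MvPolynomial (Fin (m + 1)) K)
      (FractionRing (MvPolynomial (Fin (m + 1)) K))
    rw [map_mul, map_mul, map_mul, ← hΘc, ← hΘc]
    have h := congrArg (· * (algebraMap (MvPolynomial (Fin (m + 1)) K)
      (FractionRing (MvPolynomial (Fin (m + 1)) K)) (de : MvPolynomial (Fin (m + 1)) K)))
      (congrArg θ hfd)
    simp only [map_mul, hf] at h
    rw [hsmul] at h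
    calc θ (algebraMap (MvPolynomial (Fin (m + 1)) K) _ nu)
        * algebraMap (MvPolynomial (Fin (m + 1)) K) _ (de : MvPolynomial (Fin (m + 1)) K)
        = algebraMap (MvPolynomial (Fin (m + 1)) K) _ (C c) * f
          * θ (algebraMap (MvPolynomial (Fin (m + 1)) K) _
            (de : MvPolynomial (Fin (m + 1)) K))
          * algebraMap (MvPolynomial (Fin (m + 1)) K) _
            (de : MvPolynomial (Fin (m + 1)) K) := by
          rw [← h]
      _ = algebraMap (MvPolynomial (Fin (m + 1)) K) _ (C c)
          * (algebraMap (MvPolynomial (Fin (m + 1)) K) _ nu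
            * θ (algebraMap (MvPolynomial (Fin (m + 1)) K) _
              (de : MvPolynomial (Fin (m + 1)) K))) := by
          rw [← hfd]; ring
  have eq2 : Θi nu * (de : MvPolynomial (Fin (m + 1)) K)
      = C c⁻¹ * (nu * Θi (de : MvPolynomial (Fin (m + 1)) K)) := by
    apply IsFractionRing.injective (MvPolynomial (Fin (m + 1)) K)
      (FractionRing (MvPolynomial (Fin (m + 1)) K))
    rw [map_mul, map_mul, map_mul, ← hΘic, ← hΘic]
    have h := congrArg (· * (algebraMap (MvPolynomial (Fin (m + 1)) K)
      (FractionRing (MvPolynomial (Fin (m + 1)) K)) (de : MvPolynomial (Fin (m + 1)) K)))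
      (congrArg θ.symm hfd)
    simp only [map_mul, hfs] at h
    rw [hsmul] at h
    calc θ.symm (algebraMap (MvPolynomial (Fin (m + 1)) K) _ nu)
        * algebraMap (MvPolynomial (Fin (m + 1)) K) _ (de : MvPolynomial (Fin (m + 1)) K)
        = algebraMap (MvPolynomial (Fin (m + 1)) K) _ (C c⁻¹) * f
          * θ.symm (algebraMap (MvPolynomial (Fin (m + 1)) K) _
            (de : MvPolynomial (Fin (m + 1)) K))
          * algebraMap (MvPolynomial (Fin (m + 1)) K) _
            (de : MvPolynomial (Fin (m + 1)) K) := by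
          rw [← h]
      _ = algebraMap (MvPolynomial (Fin (m + 1)) K) _ (C c⁻¹)
          * (algebraMap (MvPolynomial (Fin (m + 1)) K) _ nu
            * θ.symm (algebraMap (MvPolynomial (Fin (m + 1)) K) _
              (de : MvPolynomial (Fin (m + 1)) K))) := by
          rw [← hfd]; ring
  have rp : IsRelPrime nu de := IsFractionRing.num_den_reduced (MvPolynomial (Fin (m + 1)) K) f
  have rpΘ : IsRelPrime (Θ nu) (Θ (de : MvPolynomial (Fin (m + 1)) K)) := by
    intro d hd1 hd2
    have h1 : Θi d ∣ nu := by have := map_dvd Θi hd1; rwa [hΘiΘ] at this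
    have h2 : Θi d ∣ (de : MvPolynomial (Fin (m + 1)) K) := by
      have := map_dvd Θi hd2; rwa [hΘiΘ] at this
    have h3 := (rp h1 h2).map Θ
    rwa [hΘΘi] at h3
  have rpΘi : IsRelPrime (Θi nu) (Θi (de : MvPolynomial (Fin (m + 1)) K)) := by
    intro d hd1 hd2
    have h1 : Θ d ∣ nu := by have := map_dvd Θ hd1; rwa [hΘΘi] at this
    have h2 : Θ d ∣ (de : MvPolynomial (Fin (m + 1)) K) := by
      have := map_dvd Θ hd2; rwa [hΘΘi] at this
    have h3 := (rp h1 h2).map Θi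
    rwa [hΘiΘ] at h3
  have hCcdvd : ∀ (k : K) (hk : k ≠ 0) (x : MvPolynomial (Fin (m + 1)) K), C k * x ∣ x :=
    fun k hk x => ⟨C k⁻¹, by rw [mul_comm (C k) x, mul_assoc, ← C_mul,
      mul_inv_cancel₀ hk, C_1, mul_one]⟩
  have dvd1 : Θ nu ∣ nu := by
    have h1 : Θ nu ∣ (C c * nu) * Θ (de : MvPolynomial (Fin (m + 1)) K) :=
      ⟨(de : MvPolynomial (Fin (m + 1)) K), by linear_combination -eq1⟩
    exact (rpΘ.dvd_of_dvd_mul_right h1).trans (hCcdvd c hc nu)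
  have dvd2 : nu ∣ Θ nu := by
    have h1 : Θi nu ∣ (C c⁻¹ * nu) * Θi (de : MvPolynomial (Fin (m + 1)) K) :=
      ⟨(de : MvPolynomial (Fin (m + 1)) K), by linear_combination -eq2⟩
    have h2 : Θi nu ∣ nu := (rpΘi.dvd_of_dvd_mul_right h1).trans
      (hCcdvd c⁻¹ (inv_ne_zero hc) nu)
    have h3 := map_dvd Θ h2
    rwa [hΘΘi] at h3
  obtain ⟨u, hu⟩ := (associated_of_dvd_dvd dvd1 dvd2).symm
  obtain ⟨k, hk⟩ := mv_isUnit_eq_C (u : MvPolynomial (Fin (m + 1)) K) u.isUnit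
  have hΘnu : Θ nu = C k * nu := by rw [← hu, hk, mul_comm]
  have hΘnu0 : Θ nu ≠ 0 := by
    intro h
    apply hnu0
    rw [← hΘiΘ nu, h, map_zero]
  have hk0 : k ≠ 0 := by
    intro h
    apply hΘnu0
    rw [hΘnu, h, C_0, zero_mul]
  have hde' : C k * (de : MvPolynomial (Fin (m + 1)) K)
      = C c * Θ (de : MvPolynomial (Fin (m + 1)) K) := by
    apply mul_left_cancel₀ hnu0
    calc nu * (C k * (de : MvPolynomial (Fin (m + 1)) K))
        = (C k * nu) * (de : MvPolynomial (Fin (m + 1)) K) := by ring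
      _ = Θ nu * (de : MvPolynomial (Fin (m + 1)) K) := by rw [← hΘnu]
      _ = C c * (nu * Θ (de : MvPolynomial (Fin (m + 1)) K)) := eq1
      _ = nu * (C c * Θ (de : MvPolynomial (Fin (m + 1)) K)) := by ring
  have hΘde : Θ (de : MvPolynomial (Fin (m + 1)) K)
      = C (c⁻¹ * k) * (de : MvPolynomial (Fin (m + 1)) K) := by
    apply mul_left_cancel₀ (show (C c : MvPolynomial (Fin (m + 1)) K) ≠ 0 by
      simpa using hc)
    rw [← mul_assoc, ← C_mul, mul_inv_cancel_left₀ hc, hde']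
  obtain ⟨a, ha⟩ := main_poly (fun i => ((lam i : K))) k hk0 nu (by rw [← hΘdef]; exact hΘnu)
  obtain ⟨b, hb⟩ := main_poly (fun i => ((lam i : K))) (c⁻¹ * k)
    (mul_ne_zero (inv_ne_zero hc) hk0) (de : MvPolynomial (Fin (m + 1)) K)
    (by rw [← hΘdef]; exact hΘde)
  refine ⟨a, b, ?_, ?_⟩
  · rw [← hb]; exact hden0
  · rw [← ha, ← hb]; exact hfd

end Main

open MvPolynomial

/-- A diagonal automorphism of `K^n` is never conjugate in the Cremona group `Bir(K^n)`
(modelled as the group of `K`-automorphisms of `K(X_1,...,X_n)`) to an almost-diagonal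
automorphism `θ_λ : x ↦ (x₁+1, λ₂x₂,...,λₙxₙ)`. -/
theorem almost_diagonal_not_conj_diagonal {K : Type*} [Field K] [IsAlgClosed K] [CharZero K]
    {n : ℕ} [NeZero n] (lam μ : Fin n → Kˣ)
    (θ ρ : FractionRing (MvPolynomial (Fin n) K) ≃ₐ[K] FractionRing (MvPolynomial (Fin n) K))
    (hθ0 : θ (algebraMap (MvPolynomial (Fin n) K) _ (X 0))
        = algebraMap (MvPolynomial (Fin n) K) _ (X 0) + 1)
    (hθ : ∀ i : Fin n, i ≠ 0 → θ (algebraMap (MvPolynomial (Fin n) K) _ (X i))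
        = (lam i : K) • algebraMap (MvPolynomial (Fin n) K) _ (X i))
    (hρ : ∀ i : Fin n, ρ (algebraMap (MvPolynomial (Fin n) K) _ (X i))
        = (μ i : K) • algebraMap (MvPolynomial (Fin n) K) _ (X i))
    (φ : FractionRing (MvPolynomial (Fin n) K) ≃ₐ[K] FractionRing (MvPolynomial (Fin n) K))
    (hconj : φ * θ = ρ * φ) :
    False := by
  obtain ⟨m, rfl⟩ : ∃ m, n = m + 1 :=
    ⟨n - 1, (Nat.succ_pred_eq_of_pos (Nat.pos_of_ne_zero (NeZero.ne n))).symm⟩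
  have hmul : ∀ x, φ (θ x) = ρ (φ x) := fun x => by
    have h := congrArg
      (fun e : FractionRing (MvPolynomial (Fin (m + 1)) K) ≃ₐ[K]
        FractionRing (MvPolynomial (Fin (m + 1)) K) => e x) hconj
    simpa [AlgEquiv.mul_apply] using h
  have heig : ∀ i : Fin (m + 1),
      θ (φ.symm (algebraMap (MvPolynomial (Fin (m + 1)) K) _ (X i)))
        = ((μ i : K)) • φ.symm (algebraMap (MvPolynomial (Fin (m + 1)) K) _ (X i)) := by
    intro i
    have h1 : φ (θ (φ.symm (algebraMap (MvPolynomial (Fin (m + 1)) K) _ (X i))))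
        = ρ (algebraMap (MvPolynomial (Fin (m + 1)) K) _ (X i)) := by
      rw [hmul, φ.apply_symm_apply]
    have h2 := congrArg φ.symm h1
    rw [φ.symm_apply_apply, hρ i, Algebra.smul_def, map_mul, AlgEquiv.commutes, ← Algebra.smul_def] at h2
    exact h2
  have hSX : ∀ i, SP (φ.symm (algebraMap (MvPolynomial (Fin (m + 1)) K) _ (X i))) :=
    fun i => eigen_mem lam θ hθ0 hθ (μ i) (Units.ne_zero (μ i)) _ (heig i)
  have hSpoly : ∀ r : MvPolynomial (Fin (m + 1)) K,
      SP (φ.symm (algebraMap (MvPolynomial (Fin (m + 1)) K) _ r)) := by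
    intro r
    induction r using MvPolynomial.induction_on with
    | C a =>
        rw [show (algebraMap (MvPolynomial (Fin (m + 1)) K)
              (FractionRing (MvPolynomial (Fin (m + 1)) K))) (C a)
            = algebraMap K (FractionRing (MvPolynomial (Fin (m + 1)) K)) a from by
          rw [IsScalarTower.algebraMap_apply K (MvPolynomial (Fin (m + 1)) K)
            (FractionRing (MvPolynomial (Fin (m + 1)) K)) a, MvPolynomial.algebraMap_eq],
          AlgEquiv.commutes]
        exact SP_C a
    | add p q hp hq => rw [map_add, map_add]; exact SP_add hp hq
    | mul_X p i hp => rw [map_mul, map_mul]; exact SP_mul hp (hSX i)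
  obtain ⟨⟨pn, qd⟩, hpq⟩ := IsLocalization.surj (nonZeroDivisors (MvPolynomial (Fin (m + 1)) K))
    (φ (algebraMap (MvPolynomial (Fin (m + 1)) K) _ (X 0)))
  have h0 : algebraMap (MvPolynomial (Fin (m + 1)) K)
        (FractionRing (MvPolynomial (Fin (m + 1)) K)) (X 0)
      * φ.symm (algebraMap (MvPolynomial (Fin (m + 1)) K) _
          (qd : MvPolynomial (Fin (m + 1)) K))
      = φ.symm (algebraMap (MvPolynomial (Fin (m + 1)) K) _ pn) := by
    have h := congrArg φ.symm hpq
    rw [map_mul, φ.symm_apply_apply] at h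
    exact h
  obtain ⟨a, b, hb0, hab⟩ := hSpoly (qd : MvPolynomial (Fin (m + 1)) K)
  obtain ⟨cc, dd, hd0, hcd⟩ := hSpoly pn
  have hq0 : algebraMap (MvPolynomial (Fin (m + 1)) K)
      (FractionRing (MvPolynomial (Fin (m + 1)) K)) (qd : MvPolynomial (Fin (m + 1)) K) ≠ 0 := by
    rw [map_ne_zero_iff _ (IsFractionRing.injective (MvPolynomial (Fin (m + 1)) K)
      (FractionRing (MvPolynomial (Fin (m + 1)) K)))]
    exact mem_nonZeroDivisors_iff_ne_zero.mp qd.2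
  have hy0 : φ.symm (algebraMap (MvPolynomial (Fin (m + 1)) K) _
      (qd : MvPolynomial (Fin (m + 1)) K)) ≠ 0 := by
    intro h
    apply hq0
    have h2 := congrArg φ h
    rwa [φ.apply_symm_apply, map_zero] at h2
  have hja0 : algebraMap (MvPolynomial (Fin (m + 1)) K)
      (FractionRing (MvPolynomial (Fin (m + 1)) K)) (rename Fin.succ a) ≠ 0 := by
    rw [← hab]
    exact mul_ne_zero hy0 hb0
  have hFeq : algebraMap (MvPolynomial (Fin (m + 1)) K)
        (FractionRing (MvPolynomial (Fin (m + 1)) K)) (X 0)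
      * (algebraMap (MvPolynomial (Fin (m + 1)) K) _ (rename Fin.succ a)
          * algebraMap (MvPolynomial (Fin (m + 1)) K) _ (rename Fin.succ dd))
      = algebraMap (MvPolynomial (Fin (m + 1)) K) _ (rename Fin.succ cc)
          * algebraMap (MvPolynomial (Fin (m + 1)) K) _ (rename Fin.succ b) := by
    rw [← hab, ← hcd, ← h0]
    ring
  have hReq : (X 0 : MvPolynomial (Fin (m + 1)) K)
        * (rename Fin.succ a * rename Fin.succ dd)
      = rename Fin.succ cc * rename Fin.succ b := by
    apply IsFractionRing.injective (MvPolynomial (Fin (m + 1)) K)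
      (FractionRing (MvPolynomial (Fin (m + 1)) K))
    rw [map_mul, map_mul, map_mul]
    exact hFeq
  have hev : ∀ q : MvPolynomial (Fin m) K,
      aeval (Fin.cases 0 X : Fin (m + 1) → MvPolynomial (Fin m) K) (rename Fin.succ q)
        = q := by
    intro q
    rw [aeval_rename]
    have h : (Fin.cases 0 X : Fin (m + 1) → MvPolynomial (Fin m) K) ∘ Fin.succ = X := by
      funext i
      simp
    rw [h, aeval_X_left_apply]
  have hz := congrArg (aeval (Fin.cases 0 X : Fin (m + 1) → MvPolynomial (Fin m) K)) hReq
  rw [map_mul, map_mul, map_mul, hev, hev, hev, hev, aeval_X, Fin.cases_zero, zero_mul] at hz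
  have hzero : rename Fin.succ cc * rename Fin.succ b = (0 : MvPolynomial (Fin (m + 1)) K) := by
    rw [← map_mul, ← hz, map_zero]
  rw [hzero] at hReq
  rcases mul_eq_zero.mp hReq with h | h
  · exact MvPolynomial.X_ne_zero 0 h
  rcases mul_eq_zero.mp h with h' | h'
  · exact hja0 (by rw [h', map_zero])
  · exact hd0 (by rw [h', map_zero])
end
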